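/- arXiv:2602.01928 — 7 statements merged into one kernel-verified Lean document; each statement's English description precedes it below -/
import Mathlib

section
/- Let (E, ℰ) be a measurable space and let μ₀, μ₁, μ₁' be probability measures on (E, ℰ). Fix η ∈ [0,1] and define the mixtures μ = (1−η)·μ₀ + η·μ₁ and μ' = (1−η)·μ₀ + η·μ₁'. For every α ≥ 1, setting α' = 1 + η(α−1) and β = α'/α, one has D_{α'}(μ ‖ μ') = η · D_α(μ₁ ‖ (1−β)·μ₀ + β·μ₁'). -/
open MeasureTheory

/-- The `α`-divergence between two measures:
`D_α(μ ‖ ν) = sup { μ(S) − α·ν(S) : S measurable }`. -/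
noncomputable def alphaDiv {E : Type*} [MeasurableSpace E] (α : ℝ) (μ ν : Measure E) : ℝ :=
  ⨆ S : {S : Set E // MeasurableSet S}, ((μ S.1).toReal - α * (ν S.1).toReal)

lemma mix_toReal {E : Type*} [MeasurableSpace E] (μ ν : Measure E)
    [IsProbabilityMeasure μ] [IsProbabilityMeasure ν] (c d : ℝ) (hc : 0 ≤ c) (hd : 0 ≤ d)
    (s : Set E) :
    (((ENNReal.ofReal c • μ + ENNReal.ofReal d • ν) s)).toReal
      = c * (μ s).toReal + d * (ν s).toReal := by
  rw [Measure.add_apply, ENNReal.toReal_add, Measure.smul_apply, Measure.smul_apply,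
    smul_eq_mul, smul_eq_mul, ENNReal.toReal_mul, ENNReal.toReal_mul,
    ENNReal.toReal_ofReal hc, ENNReal.toReal_ofReal hd]
  · exact ENNReal.mul_ne_top ENNReal.ofReal_ne_top (measure_ne_top μ s)
  · exact ENNReal.mul_ne_top ENNReal.ofReal_ne_top (measure_ne_top ν s)

/-- Balle et al.. For probability measures `μ₀, μ₁, μ₁'`, `η ∈ [0,1]`,
mixtures `μ = (1−η)μ₀ + ημ₁` and `μ' = (1−η)μ₀ + ημ₁'`, and any `α ≥ 1`, setting
`α' = 1 + η(α−1)` and `β = α'/α`, one has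
`D_{α'}(μ ‖ μ') = η · D_α(μ₁ ‖ (1−β)μ₀ + βμ₁')`. -/
theorem alphaDiv_mixture_eq {E : Type*} [MeasurableSpace E]
    (μ₀ μ₁ μ₁' : Measure E)
    [IsProbabilityMeasure μ₀] [IsProbabilityMeasure μ₁] [IsProbabilityMeasure μ₁']
    (η : ℝ) (hη0 : 0 ≤ η) (hη1 : η ≤ 1) (α : ℝ) (hα : 1 ≤ α) :
    alphaDiv (1 + η * (α - 1))
        (ENNReal.ofReal (1 - η) • μ₀ + ENNReal.ofReal η • μ₁)
        (ENNReal.ofReal (1 - η) • μ₀ + ENNReal.ofReal η • μ₁')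
      = η * alphaDiv α μ₁
          (ENNReal.ofReal (1 - (1 + η * (α - 1)) / α) • μ₀
            + ENNReal.ofReal ((1 + η * (α - 1)) / α) • μ₁') := by
  have hα0 : (0:ℝ) < α := lt_of_lt_of_le one_pos hα
  have hα' : (0:ℝ) ≤ 1 + η * (α - 1) := by nlinarith
  have hβ : (0:ℝ) ≤ (1 + η * (α - 1)) / α := div_nonneg hα' hα0.le
  have hβ1 : (0:ℝ) ≤ 1 - (1 + η * (α - 1)) / α := by
    rw [sub_nonneg, div_le_one hα0]; nlinarith
  unfold alphaDiv
  rw [Real.mul_iSup_of_nonneg hη0]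
  congr 1
  funext S
  rw [mix_toReal μ₀ μ₁ _ _ (by linarith) hη0, mix_toReal μ₀ μ₁' _ _ (by linarith) hη0,
    mix_toReal μ₀ μ₁' _ _ hβ1 hβ]
  field_simp
  ring
end

section
/- Let ℱ be a MAR missing feature mechanism on 𝒵 ⊆ ℝᵈ and let 𝒟 = ℱ^{⊗n} be the induced missing data mechanism. For neighboring datasets z ≃ z' in 𝒵ⁿ differing at record i⋆, define H⋆(z, z') = { m ∈ ({0,1}ᵈ)ⁿ : m_{i⋆} ≠ 𝟙 } (the differing record is at least partially observed). Then there exists a constant p⋆ ∈ [0,1], independent of the pair of neighboring datasets, such that for all neighboring z ≃ z', P(𝒟(z) ∈ H⋆(z, z')) = P(𝒟(z') ∈ H⋆(z, z')) = p⋆. -/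
open scoped ENNReal

/-- A missing feature mechanism is MAR if the mask probabilities only depend on the
observed coordinates `obs(m) = {j : m j = false}`. -/
def IsMAR {d : ℕ} {𝒵 : Set (Fin d → ℝ)} (F : 𝒵 → PMF (Fin d → Bool)) : Prop :=
  ∀ (z z' : 𝒵) (m : Fin d → Bool),
    (∀ j, m j = false → (z : Fin d → ℝ) j = (z' : Fin d → ℝ) j) → F z m = F z' m

private lemma pmf_sum_univ {d : ℕ} (P : PMF (Fin d → Bool)) :
    ∑ x : Fin d → Bool, P x = 1 := by
  rw [← tsum_fintype (L := SummationFilter.unconditional _)]; exact P.tsum_coe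

private lemma key_sum {d n : ℕ} {𝒵 : Set (Fin d → ℝ)}
    (F : 𝒵 → PMF (Fin d → Bool)) (z : Fin n → 𝒵) (iStar : Fin n) :
    (∑ m ∈ Finset.univ.filter
        (fun m : Fin n → Fin d → Bool => m iStar ≠ fun _ => true),
      ∏ i, (F (z i)) (m i)) = 1 - (F (z iStar)) (fun _ => true) := by
  classical
  set g : Fin n → (Fin d → Bool) → ℝ≥0∞ := fun i x =>
    if i = iStar then (if x = (fun _ => true) then 0 else (F (z i)) x)
    else (F (z i)) x with hg
  have h1 : (∑ m ∈ Finset.univ.filter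
        (fun m : Fin n → Fin d → Bool => m iStar ≠ fun _ => true),
      ∏ i, (F (z i)) (m i)) = ∑ m : Fin n → Fin d → Bool, ∏ i, g i (m i) := by
    rw [Finset.sum_filter]
    refine Finset.sum_congr rfl fun m _ => ?_
    by_cases hm : m iStar = fun _ => true
    · simp only [hm, ne_eq, not_true_eq_false, if_false]
      refine (Finset.prod_eq_zero (Finset.mem_univ iStar) ?_).symm
      simp [hg, hm]
    · simp only [ne_eq, hm, not_false_eq_true, if_true]
      refine Finset.prod_congr rfl fun i _ => ?_
      by_cases hi : i = iStar
      · subst hi; simp [hg, hm]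
      · simp [hg, hi]
  rw [h1, ← Fintype.prod_sum]
  have h2 : ∀ i, i ≠ iStar → ∑ x : Fin d → Bool, g i x = 1 := by
    intro i hi
    simp only [hg, hi, if_false]
    exact pmf_sum_univ _
  have h3 : ∑ x : Fin d → Bool, g iStar x = 1 - (F (z iStar)) (fun _ => true) := by
    have hsplit : (F (z iStar)) (fun _ => true) + ∑ x : Fin d → Bool, g iStar x = 1 := by
      have : (F (z iStar)) (fun _ => true)
          = ∑ x : Fin d → Bool, (if x = (fun _ => true) then (F (z iStar)) x else 0) := by
        rw [Finset.sum_ite_eq' Finset.univ (fun _ => true) (fun x => (F (z iStar)) x)]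
        simp
      rw [this, ← Finset.sum_add_distrib]
      rw [← pmf_sum_univ (F (z iStar))]
      refine Finset.sum_congr rfl fun x _ => ?_
      by_cases hx : x = (fun _ : Fin d => true) <;> simp [hg, hx]
    have hfin : (F (z iStar)) (fun _ => true) ≠ ⊤ :=
      ((F (z iStar)).coe_le_one _).trans_lt ENNReal.one_lt_top |>.ne
    rw [← hsplit, ENNReal.add_sub_cancel_left hfin]
  calc ∏ i, ∑ x : Fin d → Bool, g i x
      = ∏ i, (if i = iStar then 1 - (F (z iStar)) (fun _ => true) else 1) := by
        refine Finset.prod_congr rfl fun i _ => ?_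
        by_cases hi : i = iStar
        · subst hi; simp [h3]
        · simp [hi, h2 i hi]
    _ = 1 - (F (z iStar)) (fun _ => true) := by simp

/-- For the missing data mechanism `𝒟 = ℱ^{⊗n}` induced by a MAR missing
feature mechanism, there exists a constant `p⋆ ∈ [0,1]`, independent of the pair of
neighboring datasets, such that for all neighboring `z ≃ z'` differing at record `iStar`,
`P(𝒟(z) ∈ H⋆(z,z')) = P(𝒟(z') ∈ H⋆(z,z')) = p⋆`, where
`H⋆(z,z') = {m : m_{iStar} ≠ 𝟙}` is the event that the differing record is at least
partially observed. -/
theorem mar_partially_observed_const {d n : ℕ} {𝒵 : Set (Fin d → ℝ)}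
    (F : 𝒵 → PMF (Fin d → Bool)) (hMAR : IsMAR F) :
    ∃ p : ℝ≥0∞, p ≤ 1 ∧
      ∀ (z z' : Fin n → 𝒵) (iStar : Fin n),
        z iStar ≠ z' iStar → (∀ i, i ≠ iStar → z i = z' i) →
        (∑ m ∈ Finset.univ.filter
            (fun m : Fin n → Fin d → Bool => m iStar ≠ fun _ => true),
          ∏ i, (F (z i)) (m i)) = p ∧
        (∑ m ∈ Finset.univ.filter
            (fun m : Fin n → Fin d → Bool => m iStar ≠ fun _ => true),
          ∏ i, (F (z' i)) (m i)) = p := by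
  classical
  by_cases h𝒵 : Nonempty 𝒵
  · obtain ⟨w₀⟩ := h𝒵
    have hconst : ∀ w : 𝒵, (F w) (fun _ => true) = (F w₀) (fun _ => true) := by
      intro w
      exact hMAR w w₀ (fun _ => true) (fun j hj => by simp at hj)
    refine ⟨1 - (F w₀) (fun _ => true), tsub_le_self.trans le_rfl, ?_⟩
    intro z z' iStar _ _
    constructor
    · rw [key_sum F z iStar, hconst (z iStar)]
    · rw [key_sum F z' iStar, hconst (z' iStar)]
  · exact ⟨0, zero_le_one, fun z _ iStar _ _ => absurd ⟨z iStar⟩ h𝒵⟩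
end

section
/- Let ε > 0 and δ ∈ [0,1]. Let 𝒜 be a randomized algorithm on incomplete datasets in 𝒵_miss^n (where 𝒵_miss ⊆ (ℝ ∪ {NA})ᵈ) that is (ε, δ)-differentially private with respect to the substitute-one-record neighbor relation. Let 𝒟 = ℱ^{⊗n} be a MAR missing data mechanism with partial-observation probability p⋆ (the probability that the mask of any given record is not all-ones). Let 𝒜_𝒟 be the composed algorithm that on complete input z ∈ 𝒵ⁿ samples a mask m ~ 𝒟(z) and outputs 𝒜(z̃(m)), where z̃(m) is z with the masked entries replaced by NA. Then 𝒜_𝒟 satisfies δ_{𝒜_𝒟}(ε') ≤ p⋆·δ, where ε' = ln(1 + p⋆(e^ε − 1)); equivalently, for all neighboring complete datasets z ≃ z' and all measurable S, P(𝒜_𝒟(z) ∈ S) − e^{ε'}·P(𝒜_𝒟(z') ∈ S) ≤ p⋆·δ. -/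
open MeasureTheory
open scoped ENNReal

/-- Masking a sample: coordinate `j` is kept if `m j = false` and replaced by `NA`
(modeled as `none`) if `m j = true`. -/
def maskSample {d : ℕ} (z : Fin d → ℝ) (m : Fin d → Bool) : Fin d → Option ℝ :=
  fun j => if m j then none else some (z j)

/-- Recombine a choice of mask for record `i₀` with masks for the remaining records. -/
private def ampMsk {n : ℕ} {β : Type*} (i₀ : Fin n) (m₀ : β)
    (r : {j : Fin n // j ≠ i₀} → β) : Fin n → β :=
  (Equiv.funSplitAt i₀ β).symm (m₀, r)

private lemma ampMsk_same {n : ℕ} {β : Type*} (i₀ : Fin n) (m₀ : β)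
    (r : {j : Fin n // j ≠ i₀} → β) : ampMsk i₀ m₀ r i₀ = m₀ := by
  simp [ampMsk, Equiv.funSplitAt, Equiv.piSplitAt]

private lemma ampMsk_other {n : ℕ} {β : Type*} (i₀ : Fin n) (m₀ : β)
    (r : {j : Fin n // j ≠ i₀} → β) (i : Fin n) (hi : i ≠ i₀) :
    ampMsk i₀ m₀ r i = r ⟨i, hi⟩ := by
  simp [ampMsk, Equiv.funSplitAt, Equiv.piSplitAt, hi]

private lemma amp_sum_split {n : ℕ} {β M : Type*} [Fintype β] [AddCommMonoid M] (i₀ : Fin n)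
    (g : (Fin n → β) → M) :
    ∑ m : Fin n → β, g m
      = ∑ m₀ : β, ∑ r : {j : Fin n // j ≠ i₀} → β, g (ampMsk i₀ m₀ r) := by
  unfold ampMsk
  rw [← Equiv.sum_comp (Equiv.funSplitAt i₀ β).symm g, Fintype.sum_prod_type]

private lemma amp_prod_split {n : ℕ} {M : Type*} [CommMonoid M] (i₀ : Fin n) (t : Fin n → M) :
    ∏ i, t i = t i₀ * ∏ j : {j : Fin n // j ≠ i₀}, t j := by
  rw [← Finset.mul_prod_erase Finset.univ t (Finset.mem_univ i₀)]
  congr 1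
  exact Finset.prod_subtype _ (by simp) t

/-- The core real-number inequality behind amplification by subsampling. -/
private lemma amp_core (b c c' p δ E : ℝ) (hb : 0 ≤ b) (hc' : 0 ≤ c')
    (hp0 : 0 ≤ p) (hp1 : p ≤ 1) (hδ : 0 ≤ δ) (hE : 1 ≤ E)
    (h1 : c ≤ p * (E * b) + p * δ) (h2 : p * c ≤ p * (E * c' + p * δ)) :
    (1 - p) * b + c ≤ (1 + p * (E - 1)) * ((1 - p) * b + c') + p * δ := by
  rcases le_or_gt (p * b) c' with h | h
  · nlinarith [mul_nonneg (mul_nonneg (mul_nonneg hp0 (by linarith : (0:ℝ) ≤ E - 1))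
        (by linarith : (0:ℝ) ≤ 1 - p)) hb,
      mul_nonneg (by nlinarith : (0:ℝ) ≤ 1 + p * (E - 1)) (by linarith : (0:ℝ) ≤ c' - p * b)]
  · rcases eq_or_lt_of_le hp0 with hp | hp
    · nlinarith
    · have hc2 : c ≤ E * c' + p * δ := by
        have := (mul_le_mul_iff_of_pos_left hp).mp h2
        linarith
      nlinarith [mul_nonneg (mul_nonneg (by linarith : (0:ℝ) ≤ E - 1)
        (by linarith : (0:ℝ) ≤ 1 - p)) (by linarith : (0:ℝ) ≤ p * b - c')]

/-- privacy amplification by missing data. Let `𝒜` be an `(ε,δ)`-DP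
randomized algorithm on incomplete datasets, and `𝒟 = ℱ^{⊗n}` a MAR missing data
mechanism for which the mask of any record fails to be all-ones with probability `p⋆`.
Then the composed algorithm `𝒜_𝒟` (sample `m ~ 𝒟(z)`, output `𝒜(z̃(m))`) satisfies, for
all neighboring complete datasets `z ≃ z'` and all measurable `S`,
`P(𝒜_𝒟(z) ∈ S) − e^{ε'}·P(𝒜_𝒟(z') ∈ S) ≤ p⋆·δ`, where `ε' = ln(1 + p⋆(e^ε − 1))`. -/
theorem amplification_by_missing_data {d n : ℕ} {Ω : Type*} [MeasurableSpace Ω]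
    (ε δ : ℝ) (hε : 0 < ε) (hδ0 : 0 ≤ δ) (hδ1 : δ ≤ 1)
    (𝒵 : Set (Fin d → ℝ))
    (A : (Fin n → (Fin d → Option ℝ)) → Measure Ω)
    (hAprob : ∀ D, IsProbabilityMeasure (A D))
    -- `A` is `(ε, δ)`-DP w.r.t. the substitute-one-record relation on incomplete data
    (hDP : ∀ D D' : Fin n → (Fin d → Option ℝ),
      (∃ i₀, ∀ i, i ≠ i₀ → D i = D' i) →
      ∀ S : Set Ω, MeasurableSet S →
        (A D S).toReal ≤ Real.exp ε * (A D' S).toReal + δ)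
    (F : 𝒵 → PMF (Fin d → Bool)) (hMAR : IsMAR F)
    -- `p⋆` is the (data-independent) probability that a record's mask is not all-ones
    (p : ℝ) (hp0 : 0 ≤ p) (hp1 : p ≤ 1)
    (hpstar : ∀ z : 𝒵, ((F z) (fun _ => true)).toReal = 1 - p)
    -- neighboring complete datasets
    (z z' : Fin n → 𝒵) (hnbr : ∃ i₀, ∀ i, i ≠ i₀ → z i = z' i)
    (S : Set Ω) (hS : MeasurableSet S) :
    (∑ m : Fin n → Fin d → Bool, (∏ i, (F (z i)) (m i)) *
        A (fun i => maskSample ((z i) : Fin d → ℝ) (m i)) S).toReal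
      - Real.exp (Real.log (1 + p * (Real.exp ε - 1))) *
        (∑ m : Fin n → Fin d → Bool, (∏ i, (F (z' i)) (m i)) *
          A (fun i => maskSample ((z' i) : Fin d → ℝ) (m i)) S).toReal
      ≤ p * δ := by
  classical
  obtain ⟨i₀, hnb⟩ := hnbr
  have hE1 : 1 < Real.exp ε := by
    have := Real.add_one_le_exp ε; linarith
  have hexp : Real.exp (Real.log (1 + p * (Real.exp ε - 1))) = 1 + p * (Real.exp ε - 1) :=
    Real.exp_log (by nlinarith)
  rw [hexp]
  set E : ℝ := Real.exp ε with hEdef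
  -- each summand is finite
  have hAfin : ∀ D : Fin n → (Fin d → Option ℝ), A D S ≠ ⊤ := fun D => by
    haveI := hAprob D; exact measure_ne_top _ _
  have hfin : ∀ (ζ : Fin n → 𝒵) (m : Fin n → Fin d → Bool),
      (∏ i, (F (ζ i)) (m i)) * A (fun i => maskSample ((ζ i) : Fin d → ℝ) (m i)) S ≠ ⊤ := by
    intro ζ m
    refine ENNReal.mul_ne_top ?_ (hAfin _)
    refine (lt_of_le_of_lt (Finset.prod_le_prod ?_ ?_ :
      (∏ i, (F (ζ i)) (m i)) ≤ ∏ _i : Fin n, (1 : ℝ≥0∞)) ?_).ne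
    · intro i _; exact zero_le
    · intro i _; exact (F (ζ i)).coe_le_one _
    · simp
  -- real-valued components
  set a : (Fin d → Bool) → ({j : Fin n // j ≠ i₀} → Fin d → Bool) → ℝ := fun m₀ r =>
    (A (fun i => maskSample ((z i) : Fin d → ℝ) (ampMsk i₀ m₀ r i)) S).toReal with hadef
  set a' : (Fin d → Bool) → ({j : Fin n // j ≠ i₀} → Fin d → Bool) → ℝ := fun m₀ r =>
    (A (fun i => maskSample ((z' i) : Fin d → ℝ) (ampMsk i₀ m₀ r i)) S).toReal with ha'def
  set f : (Fin d → Bool) → ℝ := fun m₀ => ((F (z i₀)) m₀).toReal with hfdef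
  set f' : (Fin d → Bool) → ℝ := fun m₀ => ((F (z' i₀)) m₀).toReal with hf'def
  set q : ({j : Fin n // j ≠ i₀} → Fin d → Bool) → ℝ := fun r =>
    ∏ j : {j : Fin n // j ≠ i₀}, ((F (z j)) (r j)).toReal with hqdef
  have hq0 : ∀ r, 0 ≤ q r := fun r =>
    Finset.prod_nonneg fun j _ => ENNReal.toReal_nonneg
  have hf0 : ∀ m₀, 0 ≤ f m₀ := fun m₀ => ENNReal.toReal_nonneg
  have hf'0 : ∀ m₀, 0 ≤ f' m₀ := fun m₀ => ENNReal.toReal_nonneg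
  have ha0 : ∀ m₀ r, 0 ≤ a m₀ r := fun _ _ => ENNReal.toReal_nonneg
  have ha'0 : ∀ m₀ r, 0 ≤ a' m₀ r := fun _ _ => ENNReal.toReal_nonneg
  -- products over the remaining records coincide for z and z'
  have hprodz : ∀ (m₀ : Fin d → Bool) (r : {j : Fin n // j ≠ i₀} → Fin d → Bool),
      (∏ j : {j : Fin n // j ≠ i₀}, ((F (z j)) (ampMsk i₀ m₀ r j)).toReal) = q r := by
    intro m₀ r
    simp only [hqdef]
    exact Finset.prod_congr rfl fun j _ => by rw [ampMsk_other i₀ m₀ r j.1 j.2]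
  have hprodz' : ∀ (m₀ : Fin d → Bool) (r : {j : Fin n // j ≠ i₀} → Fin d → Bool),
      (∏ j : {j : Fin n // j ≠ i₀}, ((F (z' j)) (ampMsk i₀ m₀ r j)).toReal) = q r := by
    intro m₀ r
    simp only [hqdef]
    exact Finset.prod_congr rfl fun j _ => by
      rw [ampMsk_other i₀ m₀ r j.1 j.2, ← hnb j.1 j.2]
  -- rewrite each of the two big sums
  have key : ∀ (ζ : Fin n → 𝒵),
      (∑ m : Fin n → Fin d → Bool, (∏ i, (F (ζ i)) (m i)) *
          A (fun i => maskSample ((ζ i) : Fin d → ℝ) (m i)) S).toReal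
        = ∑ r : {j : Fin n // j ≠ i₀} → Fin d → Bool, ∑ m₀ : Fin d → Bool,
            ((F (ζ i₀)) m₀).toReal *
              ((∏ j : {j : Fin n // j ≠ i₀}, ((F (ζ j)) (ampMsk i₀ m₀ r j)).toReal) *
              (A (fun i => maskSample ((ζ i) : Fin d → ℝ) (ampMsk i₀ m₀ r i)) S).toReal) := by
    intro ζ
    rw [ENNReal.toReal_sum (fun m _ => hfin ζ m),
      amp_sum_split i₀ (fun m => ((∏ i, (F (ζ i)) (m i)) *
        A (fun i => maskSample ((ζ i) : Fin d → ℝ) (m i)) S).toReal), Finset.sum_comm]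
    refine Finset.sum_congr rfl fun r _ => Finset.sum_congr rfl fun m₀ _ => ?_
    rw [ENNReal.toReal_mul, ENNReal.toReal_prod,
      amp_prod_split i₀ (fun i => ((F (ζ i)) (ampMsk i₀ m₀ r i)).toReal),
      ampMsk_same, mul_assoc]
  have keyz :
      (∑ m : Fin n → Fin d → Bool, (∏ i, (F (z i)) (m i)) *
          A (fun i => maskSample ((z i) : Fin d → ℝ) (m i)) S).toReal
        = ∑ r : {j : Fin n // j ≠ i₀} → Fin d → Bool, ∑ m₀ : Fin d → Bool,
            f m₀ * (q r * a m₀ r) := by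
    rw [key z]
    exact Finset.sum_congr rfl fun r _ => Finset.sum_congr rfl fun m₀ _ => by
      rw [hprodz m₀ r]
  have keyz' :
      (∑ m : Fin n → Fin d → Bool, (∏ i, (F (z' i)) (m i)) *
          A (fun i => maskSample ((z' i) : Fin d → ℝ) (m i)) S).toReal
        = ∑ r : {j : Fin n // j ≠ i₀} → Fin d → Bool, ∑ m₀ : Fin d → Bool,
            f' m₀ * (q r * a' m₀ r) := by
    rw [key z']
    exact Finset.sum_congr rfl fun r _ => Finset.sum_congr rfl fun m₀ _ => by
      rw [hprodz' m₀ r]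
  rw [keyz, keyz']
  -- the all-ones mask
  set one : Fin d → Bool := fun _ => true with honedef
  have hfone : f one = 1 - p := by
    simp only [hfdef]; exact hpstar (z i₀)
  have hf'one : f' one = 1 - p := by
    simp only [hf'def]; exact hpstar (z' i₀)
  -- sums of PMF values
  have hsumf : ∀ (ζ₀ : 𝒵), ∑ m₀ : Fin d → Bool, ((F ζ₀) m₀).toReal = 1 := by
    intro ζ₀
    rw [← ENNReal.toReal_sum (fun m₀ _ => (F ζ₀).apply_ne_top m₀), ← tsum_fintype (L := .unconditional _),
      (F ζ₀).tsum_coe, ENNReal.toReal_one]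
  have hsumfp : ∑ m₀ ∈ Finset.univ.erase one, f m₀ = p := by
    have h1 : ∑ m₀ : Fin d → Bool, f m₀ = 1 := by simp only [hfdef]; exact hsumf (z i₀)
    have h2 := Finset.add_sum_erase Finset.univ f (Finset.mem_univ one)
    rw [hfone] at h2
    linarith
  have hsumf'p : ∑ m₀ ∈ Finset.univ.erase one, f' m₀ = p := by
    have h1 : ∑ m₀ : Fin d → Bool, f' m₀ = 1 := by simp only [hf'def]; exact hsumf (z' i₀)
    have h2 := Finset.add_sum_erase Finset.univ f' (Finset.mem_univ one)
    rw [hf'one] at h2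
    linarith
  -- DP between any two masked versions (the records differ only at i₀)
  have hdp : ∀ (m₀ m₀' : Fin d → Bool) (r : {j : Fin n // j ≠ i₀} → Fin d → Bool),
      a m₀ r ≤ E * a' m₀' r + δ := by
    intro m₀ m₀' r
    simp only [hadef, ha'def]
    refine hDP _ _ ⟨i₀, fun i hi => ?_⟩ S hS
    rw [ampMsk_other i₀ m₀ r i hi, ampMsk_other i₀ m₀' r i hi, hnb i hi]
  have hdpb : ∀ (m₀ : Fin d → Bool) (r : {j : Fin n // j ≠ i₀} → Fin d → Bool),
      a m₀ r ≤ E * a one r + δ := by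
    intro m₀ r
    simp only [hadef]
    refine hDP _ _ ⟨i₀, fun i hi => ?_⟩ S hS
    rw [ampMsk_other i₀ m₀ r i hi, ampMsk_other i₀ one r i hi]
  -- with record i₀ fully masked, z and z' are indistinguishable
  have hbb : ∀ r, a' one r = a one r := by
    intro r
    have hfun : (fun i => maskSample ((z' i) : Fin d → ℝ) (ampMsk i₀ one r i))
        = (fun i => maskSample ((z i) : Fin d → ℝ) (ampMsk i₀ one r i)) := by
      funext i
      by_cases hi : i = i₀
      · subst hi
        rw [ampMsk_same]
        funext j
        simp [maskSample, honedef]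
      · rw [← hnb i hi]
    simp only [ha'def, hadef, hfun]
  -- per-r inequality
  have perr : ∀ r : {j : Fin n // j ≠ i₀} → Fin d → Bool,
      ∑ m₀ : Fin d → Bool, f m₀ * (q r * a m₀ r)
        ≤ (1 + p * (E - 1)) * (∑ m₀ : Fin d → Bool, f' m₀ * (q r * a' m₀ r))
          + q r * (p * δ) := by
    intro r
    set c : ℝ := ∑ m₀ ∈ Finset.univ.erase one, f m₀ * a m₀ r with hcdef
    set c' : ℝ := ∑ m₀ ∈ Finset.univ.erase one, f' m₀ * a' m₀ r with hc'def
    have hc'0 : 0 ≤ c' :=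
      Finset.sum_nonneg fun m₀ _ => mul_nonneg (hf'0 m₀) (ha'0 m₀ r)
    have h3 : f one * a one r + ∑ m₀ ∈ Finset.univ.erase one, f m₀ * a m₀ r
        = ∑ m₀ : Fin d → Bool, f m₀ * a m₀ r := by
      simpa using Finset.add_sum_erase Finset.univ (fun m₀ => f m₀ * a m₀ r)
        (Finset.mem_univ one)
    have h3' : f' one * a' one r + ∑ m₀ ∈ Finset.univ.erase one, f' m₀ * a' m₀ r
        = ∑ m₀ : Fin d → Bool, f' m₀ * a' m₀ r := by
      simpa using Finset.add_sum_erase Finset.univ (fun m₀ => f' m₀ * a' m₀ r)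
        (Finset.mem_univ one)
    have hsz : ∑ m₀ : Fin d → Bool, f m₀ * a m₀ r = (1 - p) * a one r + c := by
      rw [hcdef, ← h3, hfone]
    have hsz' : ∑ m₀ : Fin d → Bool, f' m₀ * a' m₀ r = (1 - p) * a one r + c' := by
      rw [hc'def, ← h3', hf'one, hbb r]
    have h1 : c ≤ p * (E * a one r) + p * δ := by
      calc c ≤ ∑ m₀ ∈ Finset.univ.erase one, f m₀ * (E * a one r + δ) := by
            rw [hcdef]
            exact Finset.sum_le_sum fun m₀ _ =>
              mul_le_mul_of_nonneg_left (hdpb m₀ r) (hf0 m₀)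
        _ = p * (E * a one r) + p * δ := by
            rw [← Finset.sum_mul, hsumfp]; ring
    have hstep : ∀ m₀, p * a m₀ r ≤ E * c' + p * δ := by
      intro m₀
      calc p * a m₀ r = ∑ m₀' ∈ Finset.univ.erase one, f' m₀' * a m₀ r := by
            rw [← Finset.sum_mul, hsumf'p]
        _ ≤ ∑ m₀' ∈ Finset.univ.erase one, f' m₀' * (E * a' m₀' r + δ) :=
            Finset.sum_le_sum fun m₀' _ =>
              mul_le_mul_of_nonneg_left (hdp m₀ m₀' r) (hf'0 m₀')
        _ = E * (∑ m₀' ∈ Finset.univ.erase one, f' m₀' * a' m₀' r)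
              + (∑ m₀' ∈ Finset.univ.erase one, f' m₀') * δ := by
            rw [Finset.mul_sum, Finset.sum_mul, ← Finset.sum_add_distrib]
            exact Finset.sum_congr rfl fun m₀' _ => by ring
        _ = E * c' + p * δ := by rw [hsumf'p, ← hc'def]
    have h2 : p * c ≤ p * (E * c' + p * δ) := by
      calc p * c = ∑ m₀ ∈ Finset.univ.erase one, f m₀ * (p * a m₀ r) := by
            rw [hcdef, Finset.mul_sum]
            exact Finset.sum_congr rfl fun m₀ _ => by ring
        _ ≤ ∑ m₀ ∈ Finset.univ.erase one, f m₀ * (E * c' + p * δ) :=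
            Finset.sum_le_sum fun m₀ _ =>
              mul_le_mul_of_nonneg_left (hstep m₀) (hf0 m₀)
        _ = p * (E * c' + p * δ) := by rw [← Finset.sum_mul, hsumfp]
    have core := amp_core (a one r) c c' p δ E (ha0 one r) hc'0 hp0 hp1 hδ0 hE1.le h1 h2
    have e1 : ∑ m₀ : Fin d → Bool, f m₀ * (q r * a m₀ r)
        = q r * ((1 - p) * a one r + c) := by
      rw [← hsz, Finset.mul_sum]
      exact Finset.sum_congr rfl fun m₀ _ => by ring
    have e2 : ∑ m₀ : Fin d → Bool, f' m₀ * (q r * a' m₀ r)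
        = q r * ((1 - p) * a one r + c') := by
      rw [← hsz', Finset.mul_sum]
      exact Finset.sum_congr rfl fun m₀ _ => by ring
    rw [e1, e2]
    calc q r * ((1 - p) * a one r + c)
        ≤ q r * ((1 + p * (E - 1)) * ((1 - p) * a one r + c') + p * δ) :=
          mul_le_mul_of_nonneg_left core (hq0 r)
      _ = (1 + p * (E - 1)) * (q r * ((1 - p) * a one r + c')) + q r * (p * δ) := by ring
  -- sum over r, using ∑ q r = 1
  have hqsum : ∑ r : {j : Fin n // j ≠ i₀} → Fin d → Bool, q r = 1 := by
    simp only [hqdef]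
    rw [← Fintype.prod_sum
      (fun (j : {j : Fin n // j ≠ i₀}) (m : Fin d → Bool) => ((F (z j)) m).toReal)]
    exact Finset.prod_eq_one fun j _ => hsumf (z j)
  have main : ∑ r : {j : Fin n // j ≠ i₀} → Fin d → Bool,
        ∑ m₀ : Fin d → Bool, f m₀ * (q r * a m₀ r)
      ≤ (1 + p * (E - 1)) * (∑ r : {j : Fin n // j ≠ i₀} → Fin d → Bool,
          ∑ m₀ : Fin d → Bool, f' m₀ * (q r * a' m₀ r)) + p * δ := by
    calc ∑ r : {j : Fin n // j ≠ i₀} → Fin d → Bool,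
          ∑ m₀ : Fin d → Bool, f m₀ * (q r * a m₀ r)
        ≤ ∑ r : {j : Fin n // j ≠ i₀} → Fin d → Bool, ((1 + p * (E - 1)) *
            (∑ m₀ : Fin d → Bool, f' m₀ * (q r * a' m₀ r)) + q r * (p * δ)) :=
          Finset.sum_le_sum fun r _ => perr r
      _ = (1 + p * (E - 1)) * (∑ r : {j : Fin n // j ≠ i₀} → Fin d → Bool,
            ∑ m₀ : Fin d → Bool, f' m₀ * (q r * a' m₀ r))
          + (∑ r : {j : Fin n // j ≠ i₀} → Fin d → Bool, q r) * (p * δ) := by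
          rw [Finset.sum_add_distrib, ← Finset.mul_sum, ← Finset.sum_mul]
      _ = _ := by rw [hqsum]; ring
  linarith [main]
end

section
/- Assume 𝒵_miss ⊆ ([−B, B] ∪ {NA})ᵈ for some B > 0 and let f : 𝒵_miss^n → ℝ^{d×d} be the quadratic query f(d̃) = (1/n)·Σ_{i=1}^n d̃_i d̃_iᵀ. Then the vectorized query vec ∘ f : 𝒵_miss^n → ℝ^{d²} is feature-wise Lipschitz with respect to the ℓ₁ norm with constants L_j = 2Bd/n for all j ∈ [d]. -/
/-- Difference of two possibly-missing entries, with the convention that `NA` (modeled as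
`none`) contributes the value `0`; in particular equal `NA` entries contribute `0`. -/
def gap (x y : Option ℝ) : ℝ := |x.getD 0 - y.getD 0|

/-- Incomplete samples with entries in `[−B, B] ∪ {NA}` (`NA` modeled as `none`). -/
def BddIncSample (d : ℕ) (B : ℝ) := {v : Fin d → Option ℝ // ∀ j x, v j = some x → |x| ≤ B}

/-- The quadratic query `f(d̃) = (1/n)·Σᵢ d̃ᵢ d̃ᵢᵀ` (with `NA` entries contributing `0`). -/
noncomputable def quadQuery {d n : ℕ} {B : ℝ} (D : Fin n → BddIncSample d B) :
    Fin d → Fin d → ℝ :=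
  fun a b => (1 / (n : ℝ)) * ∑ i, ((D i).1 a).getD 0 * ((D i).1 b).getD 0

/-- On the bounded incomplete domain `([−B,B] ∪ {NA})ᵈ`, the vectorized
quadratic query `vec ∘ f`, `f(d̃) = (1/n)·Σᵢ d̃ᵢ d̃ᵢᵀ`, is feature-wise Lipschitz with
respect to the ℓ₁ norm (on `ℝ^{d²}`, `‖vec M‖₁ = Σ_{k,ℓ} |M_{kℓ}|`) with constants
`L_j = 2Bd/n` for all `j`: for all neighboring incomplete datasets differing only at
record `iStar`,
`Σ_{a,b} |f(D)_{ab} − f(D')_{ab}| ≤ Σ_j (2Bd/n)·|D_{iStar}⁽ʲ⁾ − D'_{iStar}⁽ʲ⁾|`. -/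
theorem quad_query_fwl {d n : ℕ} (hn : 0 < n) (B : ℝ) (hB : 0 < B)
    (D D' : Fin n → BddIncSample d B) (iStar : Fin n)
    (hnbr : ∀ i, i ≠ iStar → D i = D' i) :
    ∑ a, ∑ b, |quadQuery D a b - quadQuery D' a b|
      ≤ ∑ j, (2 * B * d / n) * gap ((D iStar).1 j) ((D' iStar).1 j) := by
  set x : Fin d → ℝ := fun j => ((D iStar).1 j).getD 0 with hxdef
  set y : Fin d → ℝ := fun j => ((D' iStar).1 j).getD 0 with hydef
  have hx : ∀ j, |x j| ≤ B := by
    intro j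
    rcases h : (D iStar).1 j with _ | v
    · simp [hxdef, h, abs_of_nonneg, hB.le]
    · simpa [hxdef, h] using (D iStar).2 j v h
  have hy : ∀ j, |y j| ≤ B := by
    intro j
    rcases h : (D' iStar).1 j with _ | v
    · simp [hydef, h, abs_of_nonneg, hB.le]
    · simpa [hydef, h] using (D' iStar).2 j v h
  have hg : ∀ j, gap ((D iStar).1 j) ((D' iStar).1 j) = |x j - y j| := fun j => rfl
  have hn' : (0:ℝ) ≤ 1 / (n : ℝ) := by positivity
  have key : ∀ a b, quadQuery D a b - quadQuery D' a b
      = (1 / (n : ℝ)) * (x a * x b - y a * y b) := by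
    intro a b
    unfold quadQuery
    rw [← mul_sub, ← Finset.sum_sub_distrib]
    congr 1
    rw [Finset.sum_eq_single iStar]
    · intro i _ hi; rw [hnbr i hi]; ring
    · intro h; exact absurd (Finset.mem_univ iStar) h
  have step : ∑ a, ∑ b, |quadQuery D a b - quadQuery D' a b|
      ≤ ∑ a, ∑ b, (1 / (n : ℝ)) * (B * |x b - y b| + B * |x a - y a|) := by
    refine Finset.sum_le_sum fun a _ => Finset.sum_le_sum fun b _ => ?_
    rw [key a b, abs_mul, abs_of_nonneg hn']
    refine mul_le_mul_of_nonneg_left ?_ hn'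
    have h1 : x a * x b - y a * y b = x a * (x b - y b) + (x a - y a) * y b := by ring
    rw [h1]
    refine (abs_add_le _ _).trans ?_
    rw [abs_mul, abs_mul]
    refine add_le_add (mul_le_mul_of_nonneg_right (hx a) (abs_nonneg _)) ?_
    rw [mul_comm]
    exact mul_le_mul_of_nonneg_right (hy b) (abs_nonneg _)
  refine step.trans (le_of_eq ?_)
  simp only [hg]
  simp only [mul_add, Finset.sum_add_distrib, ← Finset.mul_sum, Finset.sum_const,
    Finset.card_univ, Fintype.card_fin, nsmul_eq_mul]
  rw [Finset.mul_sum]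
  ring_nf
  rw [← Finset.mul_sum]
  ring
end

section
/- Assume all data records satisfy ‖z_i‖_∞ ≤ B for some B > 0, and let f : 𝒵_miss^n → ℝᵏ be feature-wise Lipschitz with respect to the ℓ_p norm with constants L₁, …, L_d. Suppose every mask m in the support of the missing data mechanism satisfies, for every record i, Card(obs(m_i))/d ≤ ρ (at most a fraction ρ of features observed per record). Then the masked ℓ_p-sensitivity Δ̃_p(f) = sup over neighboring complete datasets z ≃ z' and admissible masks m of ‖f(z̃(m)) − f(z̃'(m))‖_p satisfies Δ̃_p(f) ≤ 2B·Σ_{j=1}^{⌊ρd⌋} L_(j), where L_(1) ≥ L_(2) ≥ … ≥ L_(d) is the non-increasing rearrangement of the constants L_j. -/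
lemma fin_le_orderEmb {d s : ℕ} (e : Fin s ↪o Fin d) (i : Fin s) : (i : ℕ) ≤ (e i : ℕ) := by
  obtain ⟨v, hv⟩ := i
  induction v with
  | zero => exact Nat.zero_le _
  | succ v ih =>
      have hv' : v < s := Nat.lt_of_succ_lt hv
      have h1 : (e ⟨v, hv'⟩ : ℕ) < (e ⟨v + 1, hv⟩ : ℕ) := e.strictMono (by simp [Fin.lt_def])
      have h2 : v ≤ (e ⟨v, hv'⟩ : ℕ) := ih hv'
      show v + 1 ≤ _
      omega

lemma sum_le_top {d : ℕ} (g : Fin d → ℝ) (hg : ∀ j, 0 ≤ g j)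
    (hanti : ∀ j j' : Fin d, j ≤ j' → g j' ≤ g j)
    (S : Finset (Fin d)) (t : ℕ) (hcard : S.card ≤ t) :
    ∑ j ∈ S, g j ≤ ∑ j ∈ Finset.univ.filter (fun j : Fin d => (j : ℕ) < t), g j := by
  set s := S.card with hs
  let e : Fin s ↪o Fin d := S.orderEmbOfFin hs
  have himg : Finset.image (fun i => e i) Finset.univ = S := by
    ext x
    simp only [Finset.mem_image, Finset.mem_univ, true_and]
    constructor
    · rintro ⟨i, rfl⟩; exact S.orderEmbOfFin_mem hs i
    · intro hx
      have : x ∈ Set.range (e : Fin s → Fin d) := by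
        rw [show Set.range (e : Fin s → Fin d) = ↑S from S.range_orderEmbOfFin hs]; exact hx
      obtain ⟨i, rfl⟩ := this; exact ⟨i, rfl⟩
  have hsum : ∑ j ∈ S, g j = ∑ i : Fin s, g (e i) := by
    rw [← himg, Finset.sum_image (fun a _ b _ h => e.injective h)]
  rw [hsum]
  have hsd : s ≤ d := by simpa [hs] using (Finset.card_le_univ S)
  have step1 : ∑ i : Fin s, g (e i) ≤ ∑ i : Fin s, g (Fin.castLE hsd i) := by
    apply Finset.sum_le_sum
    intro i _
    exact hanti _ _ (by simpa [Fin.le_def] using fin_le_orderEmb e i)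
  have himg2 : Finset.image (fun i => Fin.castLE hsd i) Finset.univ
      = Finset.univ.filter (fun j : Fin d => (j : ℕ) < s) := by
    ext x
    simp only [Finset.mem_image, Finset.mem_univ, true_and, Finset.mem_filter]
    constructor
    · rintro ⟨i, rfl⟩; exact i.2
    · intro hx; exact ⟨⟨x, hx⟩, rfl⟩
  have step2 : ∑ i : Fin s, g (Fin.castLE hsd i)
      = ∑ j ∈ Finset.univ.filter (fun j : Fin d => (j : ℕ) < s), g j := by
    rw [← himg2, Finset.sum_image (fun a _ b _ h => Fin.castLE_injective hsd h)]
  have step3 : ∑ j ∈ Finset.univ.filter (fun j : Fin d => (j : ℕ) < s), g j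
      ≤ ∑ j ∈ Finset.univ.filter (fun j : Fin d => (j : ℕ) < t), g j := by
    apply Finset.sum_le_sum_of_subset_of_nonneg
    · intro x; simp only [Finset.mem_filter, Finset.mem_univ, true_and]; omega
    · intro j _ _; exact hg j
  calc ∑ i : Fin s, g (e i) ≤ _ := step1
    _ = _ := step2
    _ ≤ _ := step3


/-- A query `f` on incomplete datasets is feature-wise Lipschitz (FWL) with respect to a
norm `N` with constants `L₁,…,L_d` if for all neighboring datasets (differing only at
record `iStar`), `N(f(d̃) − f(d̃')) ≤ Σ_j L_j·|d̃_{iStar}⁽ʲ⁾ − d̃'_{iStar}⁽ʲ⁾|`. -/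
def FWL {d n k : ℕ} (N : (Fin k → ℝ) → ℝ)
    (f : (Fin n → (Fin d → Option ℝ)) → Fin k → ℝ) (L : Fin d → ℝ) : Prop :=
  ∀ (D D' : Fin n → (Fin d → Option ℝ)) (iStar : Fin n),
    (∀ i, i ≠ iStar → D i = D' i) →
    N (fun r => f D r - f D' r) ≤ ∑ j, L j * gap (D iStar j) (D' iStar j)

/-- sensitivity of FWL queries under missing data. Assume all records
are bounded by `B` in sup-norm and `f` is FWL with respect to the ℓ_p norm with constants
`L₁,…,L_d ≥ 0`. If a mask `m` observes at most a fraction `ρ` of the features of each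
record, then for any neighboring complete datasets `z ≃ z'`,
`‖f(z̃(m)) − f(z̃'(m))‖_p ≤ 2B·Σ_{j=1}^{⌊ρd⌋} L_(j)`, where `L_(1) ≥ … ≥ L_(d)` is the
non-increasing rearrangement of the constants (given by a sorting permutation `σ`). -/
theorem masked_sensitivity_bound {d n k : ℕ} (B ρ : ℝ) (hB : 0 < B) (hρ : 0 < ρ)
    (p : ℝ) (hp : 1 ≤ p)
    (f : (Fin n → (Fin d → Option ℝ)) → Fin k → ℝ) (L : Fin d → ℝ)
    (hL : ∀ j, 0 ≤ L j)
    (hFWL : FWL (fun v => (∑ r, |v r| ^ p) ^ (1 / p)) f L)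
    (σ : Equiv.Perm (Fin d)) (hσ : ∀ j j' : Fin d, j ≤ j' → L (σ j') ≤ L (σ j))
    (z z' : Fin n → (Fin d → ℝ))
    (hzB : ∀ i j, |z i j| ≤ B) (hz'B : ∀ i j, |z' i j| ≤ B)
    (iStar : Fin n) (hnbr : ∀ i, i ≠ iStar → z i = z' i)
    (m : Fin n → Fin d → Bool)
    (hm : ∀ i, ((Finset.univ.filter fun j => m i j = false).card : ℝ) ≤ ρ * d) :
    (∑ r, |f (fun i => maskSample (z i) (m i)) r
            - f (fun i => maskSample (z' i) (m i)) r| ^ p) ^ (1 / p)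
      ≤ 2 * B * ∑ j ∈ Finset.univ.filter (fun j : Fin d => (j : ℕ) < ⌊ρ * d⌋₊), L (σ j) := by
  set D := fun i => maskSample (z i) (m i) with hD
  set D' := fun i => maskSample (z' i) (m i) with hD'
  have hnb : ∀ i, i ≠ iStar → D i = D' i := by
    intro i hi; simp only [hD, hD', hnbr i hi]
  have h1 := hFWL D D' iStar hnb
  set S : Finset (Fin d) := Finset.univ.filter (fun j => m iStar j = false) with hS
  have hgap : ∀ j : Fin d, L j * gap (D iStar j) (D' iStar j)
      ≤ if j ∈ S then L j * (2 * B) else 0 := by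
    intro j
    by_cases hmj : m iStar j
    · have : j ∉ S := by simp [hS, hmj]
      simp only [this, if_false, hD, hD', maskSample, hmj, if_true, gap]
      simp
    · have hjS : j ∈ S := by simp [hS, hmj]
      simp only [hjS, if_true, hD, hD', maskSample, hmj, if_false, gap, Option.getD_some]
      apply mul_le_mul_of_nonneg_left _ (hL j)
      calc |z iStar j - z' iStar j| ≤ |z iStar j| + |z' iStar j| := abs_sub _ _
        _ ≤ B + B := add_le_add (hzB _ _) (hz'B _ _)
        _ = 2 * B := by ring
  have h2 : ∑ j, L j * gap (D iStar j) (D' iStar j) ≤ ∑ j ∈ S, L j * (2 * B) := by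
    calc ∑ j, L j * gap (D iStar j) (D' iStar j)
        ≤ ∑ j, if j ∈ S then L j * (2 * B) else 0 := Finset.sum_le_sum fun j _ => hgap j
      _ = ∑ j ∈ S, L j * (2 * B) := by rw [Finset.sum_ite_mem]; simp
  have hcard : S.card ≤ ⌊ρ * d⌋₊ := Nat.le_floor (hm iStar)
  have h3 : ∑ j ∈ S, L j ≤ ∑ j ∈ Finset.univ.filter (fun j : Fin d => (j : ℕ) < ⌊ρ * d⌋₊), L (σ j) := by
    have heq : ∑ j ∈ S, L j = ∑ j ∈ S.image σ.symm, L (σ j) := by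
      rw [Finset.sum_image (fun a _ b _ h => σ.symm.injective h)]; simp
    rw [heq]
    exact sum_le_top (fun j => L (σ j)) (fun j => hL _) hσ _ _
      (by rw [Finset.card_image_of_injective _ σ.symm.injective]; exact hcard)
  calc (∑ r, |f D r - f D' r| ^ p) ^ (1 / p)
      ≤ ∑ j, L j * gap (D iStar j) (D' iStar j) := h1
    _ ≤ ∑ j ∈ S, L j * (2 * B) := h2
    _ = 2 * B * ∑ j ∈ S, L j := by rw [Finset.mul_sum]; exact Finset.sum_congr rfl fun j _ => mul_comm _ _
    _ ≤ 2 * B * ∑ j ∈ Finset.univ.filter (fun j : Fin d => (j : ℕ) < ⌊ρ * d⌋₊), L (σ j) := by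
        apply mul_le_mul_of_nonneg_left h3; linarith
end

section
/- Let ε > 0 and assume all records satisfy ‖z_i‖_∞ ≤ B. Let 𝒟 be a MAR missing data mechanism such that every mask in its support observes at most a fraction ρ of the features of each record, and let p⋆ be the probability that the differing record's mask is not all-ones. Let f be FWL with respect to ℓ₁ with constants L₁,…,L_d, set C₁ = 2B·Σ_{j=1}^d L_j and C̃₁ = 2B·Σ_{j=1}^{⌊ρd⌋} L_(j) (non-increasing rearrangement), and let 𝒜ᴸ be the Laplace mechanism d̃ ↦ f(d̃) + Y with Y having i.i.d. Laplace(scale b = C₁/ε) components. Then the composed algorithm 𝒜ᴸ_𝒟 (sample mask m ~ 𝒟(z), output 𝒜ᴸ(z̃(m))) satisfies δ_{𝒜ᴸ_𝒟}(ε'₀) = 0 where ε'₀ = ln(1 + p⋆·(e^{ε₀} − 1)) and ε₀ = (C̃₁/C₁)·ε; i.e., 𝒜ᴸ_𝒟 is (ε'₀, 0)-differentially private on complete datasets. -/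
open MeasureTheory
open scoped ENNReal

/-- A query `f` on incomplete datasets is feature-wise Lipschitz (FWL) with respect to the
ℓ₁ norm with constants `L₁,…,L_d` if for all neighboring datasets (differing only at
record `iStar`), `‖f(d̃) − f(d̃')‖₁ ≤ Σ_j L_j·|d̃_{iStar}⁽ʲ⁾ − d̃'_{iStar}⁽ʲ⁾|`. -/
def FWL1 {d n k : ℕ} (f : (Fin n → (Fin d → Option ℝ)) → Fin k → ℝ) (L : Fin d → ℝ) :
    Prop :=
  ∀ (D D' : Fin n → (Fin d → Option ℝ)) (iStar : Fin n),
    (∀ i, i ≠ iStar → D i = D' i) →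
    ∑ r, |f D r - f D' r| ≤ ∑ j, L j * gap (D iStar j) (D' iStar j)

/-- The Laplace mechanism with scale `b` applied to the query `f` on an incomplete
dataset: the distribution of `f(d̃) + Y` with `Y` having i.i.d. Laplace(b) coordinates. -/
noncomputable def laplaceMech {d n k : ℕ} (f : (Fin n → (Fin d → Option ℝ)) → Fin k → ℝ)
    (b : ℝ) (D : Fin n → (Fin d → Option ℝ)) : Measure (Fin k → ℝ) :=
  volume.withDensity
    (fun t => ENNReal.ofReal ((1 / (2 * b)) ^ k * Real.exp (-(∑ r, |t r - f D r|) / b)))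

/-! ### Auxiliary lemmas -/

lemma gap_comm (x y : Option ℝ) : gap x y = gap y x := abs_sub_comm _ _

lemma strictMono_fin_le {c d : ℕ} {e : Fin c → Fin d} (he : StrictMono e) :
    ∀ i : Fin c, (i : ℕ) ≤ (e i : ℕ) := by
  have H : ∀ N : ℕ, ∀ i : Fin c, (i : ℕ) ≤ N → (i : ℕ) ≤ (e i : ℕ) := by
    intro N
    induction N with
    | zero => intro i h; omega
    | succ N ih =>
      intro i h
      rcases Nat.lt_or_ge (i : ℕ) (N + 1) with h' | h'
      · exact ih i (by omega)
      · have hi : (i : ℕ) = N + 1 := by omega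
        have hN : N < c := by omega
        have hlt : (⟨N, hN⟩ : Fin c) < i := by
          simp [Fin.lt_def, hi]
        have h1 : N ≤ ((e ⟨N, hN⟩ : Fin d) : ℕ) := by simpa using ih ⟨N, hN⟩ le_rfl
        have h2 : ((e ⟨N, hN⟩ : Fin d) : ℕ) < ((e i : Fin d) : ℕ) := Fin.lt_def.mp (he hlt)
        omega
  exact fun i => H (i : ℕ) i le_rfl

lemma sum_le_top_sum {d : ℕ} (L : Fin d → ℝ) (hL : ∀ j, 0 ≤ L j)
    (σ : Equiv.Perm (Fin d)) (hσ : ∀ j j' : Fin d, j ≤ j' → L (σ j') ≤ L (σ j))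
    (N : ℕ) (s : Finset (Fin d)) (hcard : s.card ≤ N) :
    ∑ j ∈ s, L j ≤ ∑ j ∈ Finset.univ.filter (fun j : Fin d => (j : ℕ) < N), L (σ j) := by
  set w : Fin d → ℝ := fun j => L (σ j) with hw
  set t : Finset (Fin d) := s.image σ.symm with hts
  have htc : t.card = s.card := Finset.card_image_of_injective s σ.symm.injective
  have hsum : ∑ j ∈ t, w j = ∑ j ∈ s, L j := by
    rw [hts, Finset.sum_image (fun x _ y _ h => σ.symm.injective h)]
    simp [hw]
  have hcd : t.card ≤ d := by
    have := t.card_le_univ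
    simpa using this
  have hcN : t.card ≤ N := htc ▸ hcard
  set e := t.orderEmbOfFin rfl with hedef
  have h1 : ∑ j ∈ t, w j = ∑ i : Fin t.card, w (e i) := by
    refine (Finset.sum_bij (fun i _ => e i) ?_ ?_ ?_ ?_).symm
    · intro i _; exact t.orderEmbOfFin_mem rfl i
    · intro i _ j _ h; exact e.injective h
    · intro j hj
      have : j ∈ Set.range e := by rw [hedef, Finset.range_orderEmbOfFin]; exact hj
      obtain ⟨i, hi⟩ := this
      exact ⟨i, Finset.mem_univ i, hi⟩
    · intro i _; rfl
  have h2 : ∑ i : Fin t.card, w (e i) ≤ ∑ i : Fin t.card, w ⟨(i : ℕ), lt_of_lt_of_le i.2 hcd⟩ := by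
    refine Finset.sum_le_sum fun i _ => ?_
    refine hσ _ _ ?_
    rw [Fin.le_def]
    exact strictMono_fin_le e.strictMono i
  have h3 : ∑ i : Fin t.card, w ⟨(i : ℕ), lt_of_lt_of_le i.2 hcd⟩
      = ∑ j ∈ Finset.univ.filter (fun j : Fin d => (j : ℕ) < t.card), w j := by
    refine Finset.sum_bij (fun i _ => (⟨(i : ℕ), lt_of_lt_of_le i.2 hcd⟩ : Fin d)) ?_ ?_ ?_ ?_
    · intro i _; simp [i.2]
    · intro i _ j _ h
      have : (i : ℕ) = (j : ℕ) := by simpa [Fin.ext_iff] using h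
      exact Fin.ext this
    · intro j hj
      simp only [Finset.mem_filter, Finset.mem_univ, true_and] at hj
      exact ⟨⟨(j : ℕ), hj⟩, Finset.mem_univ _, by simp⟩
    · intro i _; rfl
  have h4 : ∑ j ∈ Finset.univ.filter (fun j : Fin d => (j : ℕ) < t.card), w j
      ≤ ∑ j ∈ Finset.univ.filter (fun j : Fin d => (j : ℕ) < N), w j := by
    refine Finset.sum_le_sum_of_subset_of_nonneg ?_ (fun j _ _ => hL _)
    intro j hj
    simp only [Finset.mem_filter, Finset.mem_univ, true_and] at hj ⊢
    omega
  calc ∑ j ∈ s, L j = ∑ j ∈ t, w j := hsum.symm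
    _ = ∑ i : Fin t.card, w (e i) := h1
    _ ≤ _ := h2
    _ = _ := h3
    _ ≤ _ := h4

lemma laplace_ratio {d n k : ℕ} (f : (Fin n → (Fin d → Option ℝ)) → Fin k → ℝ)
    (b Δ : ℝ) (hb : 0 ≤ b)
    (D D' : Fin n → (Fin d → Option ℝ)) (hf : ∑ r, |f D r - f D' r| ≤ Δ)
    (S : Set (Fin k → ℝ)) (hS : MeasurableSet S) :
    laplaceMech f b D S ≤ ENNReal.ofReal (Real.exp (Δ / b)) * laplaceMech f b D' S := by
  unfold laplaceMech
  rw [withDensity_apply _ hS, withDensity_apply _ hS,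
    ← lintegral_const_mul' _ _ ENNReal.ofReal_ne_top]
  refine lintegral_mono fun t => ?_
  rw [← ENNReal.ofReal_mul (Real.exp_nonneg _)]
  refine ENNReal.ofReal_le_ofReal ?_
  have hc : (0:ℝ) ≤ (1 / (2 * b)) ^ k := by positivity
  have hAA : ∑ r, |t r - f D' r| ≤ (∑ r, |t r - f D r|) + Δ := by
    calc ∑ r, |t r - f D' r| ≤ ∑ r, (|t r - f D r| + |f D r - f D' r|) :=
          Finset.sum_le_sum fun r _ => abs_sub_le _ _ _
      _ = (∑ r, |t r - f D r|) + ∑ r, |f D r - f D' r| := Finset.sum_add_distrib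
      _ ≤ _ := by linarith
  have key : Real.exp (-(∑ r, |t r - f D r|) / b)
      ≤ Real.exp (Δ / b) * Real.exp (-(∑ r, |t r - f D' r|) / b) := by
    rw [← Real.exp_add]
    refine Real.exp_le_exp.2 ?_
    rcases eq_or_lt_of_le hb with h0 | hpos
    · rw [← h0]; simp
    · rw [← add_div]
      exact (div_le_div_iff_of_pos_right hpos).2 (by linarith)
  calc (1 / (2 * b)) ^ k * Real.exp (-(∑ r, |t r - f D r|) / b)
      ≤ (1 / (2 * b)) ^ k * (Real.exp (Δ / b) * Real.exp (-(∑ r, |t r - f D' r|) / b)) :=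
        mul_le_mul_of_nonneg_left key hc
    _ = Real.exp (Δ / b) * ((1 / (2 * b)) ^ k * Real.exp (-(∑ r, |t r - f D' r|) / b)) := by
        ring

/-- Splitting a tuple of masks at a record index. -/
def splitAt {n : ℕ} (i₀ : Fin n) (β : Type*) :
    (Fin n → β) ≃ β × ({i : Fin n // i ≠ i₀} → β) where
  toFun m := (m i₀, fun i => m i.1)
  invFun q := fun i => if h : i = i₀ then q.1 else q.2 ⟨i, h⟩
  left_inv m := by
    funext i; by_cases h : i = i₀ <;> simp [h]
  right_inv q := by
    refine Prod.ext ?_ ?_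
    · simp
    · funext i
      simp only
      rw [dif_neg i.2]

lemma sum_split {n : ℕ} {β : Type*} [Fintype β] [DecidableEq β] (i₀ : Fin n)
    (A : β → ℝ≥0∞) (G : (Fin n → β) → ℝ≥0∞)
    (hG : ∀ m m' : Fin n → β, (∀ i, i ≠ i₀ → m i = m' i) → G m = G m') (t₀ : β) :
    ∑ m : Fin n → β, A (m i₀) * G m
      = (∑ b, A b) * ∑ m : Fin n → β, (if m i₀ = t₀ then G m else 0) := by
  classical
  have key : ∀ (g : (Fin n → β) → ℝ≥0∞),
      ∑ m : Fin n → β, g m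
        = ∑ q : β × ({i : Fin n // i ≠ i₀} → β), g ((splitAt i₀ β).symm q) :=
    fun g => (Equiv.sum_comp (splitAt i₀ β).symm g).symm
  have hsymm_i₀ : ∀ (b : β) (r : {i : Fin n // i ≠ i₀} → β),
      (splitAt i₀ β).symm (b, r) i₀ = b := by
    intro b r; simp [splitAt]
  have hsymm_ne : ∀ (b b' : β) (r : {i : Fin n // i ≠ i₀} → β),
      G ((splitAt i₀ β).symm (b, r)) = G ((splitAt i₀ β).symm (b', r)) := by
    intro b b' r
    refine hG _ _ fun i hi => ?_
    simp [splitAt, hi]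
  rw [key (fun m => A (m i₀) * G m), key (fun m => if m i₀ = t₀ then G m else 0),
    Fintype.sum_prod_type, Fintype.sum_prod_type]
  have hRHS : ∀ b : β, (∑ r : {i : Fin n // i ≠ i₀} → β,
      (if (splitAt i₀ β).symm (b, r) i₀ = t₀ then G ((splitAt i₀ β).symm (b, r)) else 0))
      = if b = t₀ then ∑ r : {i : Fin n // i ≠ i₀} → β, G ((splitAt i₀ β).symm (t₀, r))
        else 0 := by
    intro b
    by_cases hb : b = t₀
    · subst hb; simp [hsymm_i₀]
    · simp [hsymm_i₀, hb]
  calc ∑ b, ∑ r : {i : Fin n // i ≠ i₀} → β,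
        A ((splitAt i₀ β).symm (b, r) i₀) * G ((splitAt i₀ β).symm (b, r))
      = ∑ b, ∑ r : {i : Fin n // i ≠ i₀} → β,
          A b * G ((splitAt i₀ β).symm (t₀, r)) := by
        refine Finset.sum_congr rfl fun b _ => Finset.sum_congr rfl fun r _ => ?_
        rw [hsymm_i₀, hsymm_ne b t₀ r]
    _ = ∑ b, A b * ∑ r : {i : Fin n // i ≠ i₀} → β, G ((splitAt i₀ β).symm (t₀, r)) := by
        refine Finset.sum_congr rfl fun b _ => (Finset.mul_sum _ _ _).symm
    _ = (∑ b, A b) * ∑ r : {i : Fin n // i ≠ i₀} → β, G ((splitAt i₀ β).symm (t₀, r)) :=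
        (Finset.sum_mul _ _ _).symm
    _ = (∑ b, A b) * ∑ b, ∑ r : {i : Fin n // i ≠ i₀} → β,
          (if (splitAt i₀ β).symm (b, r) i₀ = t₀ then G ((splitAt i₀ β).symm (b, r)) else 0) := by
        congr 1
        rw [Finset.sum_congr rfl fun b _ => hRHS b]
        simp


/-- missingness amplifies Laplace mechanism privacy. Let `𝒟 = ℱ^{⊗n}`
be MAR, with every supported mask observing at most a fraction `ρ` of the features of each
record, and `p⋆` the probability that a record's mask is not all-ones. Let `f` be FWL
w.r.t. ℓ₁ with constants `L_j ≥ 0`, `C₁ = 2B·Σ_j L_j`, `C̃₁ = 2B·Σ_{j≤⌊ρd⌋} L_(j)`, and let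
`𝒜ᴸ` be the Laplace mechanism with scale `b = C₁/ε`. Then the composed algorithm `𝒜ᴸ_𝒟`
is `(ε'₀, 0)`-DP on complete datasets, where `ε'₀ = ln(1 + p⋆(e^{ε₀} − 1))` and
`ε₀ = (C̃₁/C₁)·ε`. -/
theorem laplace_amplification {d n k : ℕ} (ε B ρ p : ℝ)
    (hε : 0 < ε) (hB : 0 < B) (hρ : 0 < ρ) (hp0 : 0 ≤ p) (hp1 : p ≤ 1)
    (𝒵 : Set (Fin d → ℝ)) (h𝒵 : ∀ v ∈ 𝒵, ∀ j, |v j| ≤ B)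
    (F : 𝒵 → PMF (Fin d → Bool)) (hMAR : IsMAR F)
    (hsupp : ∀ (z : 𝒵) (m : Fin d → Bool), (F z) m ≠ 0 →
      ((Finset.univ.filter fun j => m j = false).card : ℝ) ≤ ρ * d)
    (hpstar : ∀ z : 𝒵, ((F z) (fun _ => true)).toReal = 1 - p)
    (f : (Fin n → (Fin d → Option ℝ)) → Fin k → ℝ) (L : Fin d → ℝ)
    (hL : ∀ j, 0 ≤ L j) (hFWL : FWL1 f L)
    (σ : Equiv.Perm (Fin d)) (hσ : ∀ j j' : Fin d, j ≤ j' → L (σ j') ≤ L (σ j)) :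
    ∀ (z z' : Fin n → 𝒵), (∃ i₀, ∀ i, i ≠ i₀ → z i = z' i) →
    ∀ S : Set (Fin k → ℝ), MeasurableSet S →
      (∑ m : Fin n → Fin d → Bool, (∏ i, (F (z i)) (m i)) *
          laplaceMech f (2 * B * (∑ j, L j) / ε)
            (fun i => maskSample ((z i) : Fin d → ℝ) (m i)) S)
        ≤ ENNReal.ofReal
            (Real.exp (Real.log (1 + p * (Real.exp
              ((2 * B * ∑ j ∈ Finset.univ.filter (fun j : Fin d => (j : ℕ) < ⌊ρ * d⌋₊),
                  L (σ j)) / (2 * B * ∑ j, L j) * ε) - 1)))) *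
          (∑ m : Fin n → Fin d → Bool, (∏ i, (F (z' i)) (m i)) *
            laplaceMech f (2 * B * (∑ j, L j) / ε)
              (fun i => maskSample ((z' i) : Fin d → ℝ) (m i)) S) := by
  classical
  rintro z z' ⟨i₀, hnb⟩ S hS
  set allT : Fin d → Bool := fun _ => true with hallT
  set N : ℕ := ⌊ρ * (d : ℝ)⌋₊ with hN
  set SL : ℝ := ∑ j, L j with hSLdef
  set T' : ℝ := ∑ j ∈ Finset.univ.filter (fun j : Fin d => (j : ℕ) < N), L (σ j) with hT'def
  set b : ℝ := 2 * B * SL / ε with hbdef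
  set eps0 : ℝ := 2 * B * T' / (2 * B * SL) * ε with heps0def
  set a : ℝ := Real.exp (eps0 / 2) with hadef
  -- basic positivity facts
  have hSL0 : 0 ≤ SL := Finset.sum_nonneg fun j _ => hL j
  have hT'0 : 0 ≤ T' := Finset.sum_nonneg fun j _ => hL _
  have hT'SL : T' ≤ SL := by
    rw [hT'def, hSLdef, ← Equiv.sum_comp σ L]
    exact Finset.sum_le_sum_of_subset_of_nonneg (Finset.filter_subset _ _) fun j _ _ => hL _
  have hb0 : 0 ≤ b := by rw [hbdef]; positivity
  have heps00 : 0 ≤ eps0 := by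
    rw [heps0def]
    have h1 : 0 ≤ 2 * B * T' := by positivity
    have h2 : 0 ≤ 2 * B * SL := by positivity
    positivity
  have ha1 : 1 ≤ a := Real.one_le_exp (by linarith)
  have ha0 : 0 < a := lt_of_lt_of_le one_pos ha1
  -- B * T' / b ≤ eps0 / 2
  have hDb : B * T' / b ≤ eps0 / 2 := by
    rcases eq_or_lt_of_le hSL0 with h0 | hpos
    · have hT0 : T' = 0 := le_antisymm (h0 ▸ hT'SL) hT'0
      rw [hT0]
      simp only [mul_zero, zero_div]
      linarith
    · have heq : B * T' / b = eps0 / 2 := by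
        rw [hbdef, heps0def]
        field_simp
      exact le_of_eq heq
  -- the ratio bound for the Laplace mechanism between neighboring masked datasets
  have hratio : ∀ (D D' : Fin n → (Fin d → Option ℝ)), (∀ i, i ≠ i₀ → D i = D' i) →
      (∑ j, L j * gap (D i₀ j) (D' i₀ j)) ≤ B * T' →
      laplaceMech f b D S ≤ ENNReal.ofReal a * laplaceMech f b D' S := by
    intro D D' hDD hgap
    have h1 := laplace_ratio f b (B * T') hb0 D D'
      (le_trans (hFWL D D' i₀ hDD) hgap) S hS
    exact le_trans h1 (mul_le_mul_left
      (ENNReal.ofReal_le_ofReal (Real.exp_le_exp.2 hDb)) _)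
  -- per-coordinate gaps against a fully-masked record
  have hdist : ∀ (v : Fin d → ℝ), (∀ j, |v j| ≤ B) → ∀ (w : Fin d → ℝ) (m : Fin d → Bool),
      ((Finset.univ.filter fun j => m j = false).card : ℝ) ≤ ρ * d →
      ∑ j, L j * gap (maskSample v m j) (maskSample w allT j) ≤ B * T' := by
    intro v hv w m hm
    have hNcard : (Finset.univ.filter fun j => m j = false).card ≤ N := Nat.le_floor hm
    have hgj : ∀ j, gap (maskSample v m j) (maskSample w allT j)
        = (if m j = false then |v j| else 0) := by
      intro j
      by_cases h : m j <;> simp [gap, maskSample, hallT, h]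
    calc ∑ j, L j * gap (maskSample v m j) (maskSample w allT j)
        = ∑ j, (if m j = false then L j * |v j| else 0) := by
          refine Finset.sum_congr rfl fun j _ => ?_
          rw [hgj j, mul_ite, mul_zero]
      _ = ∑ j ∈ Finset.univ.filter (fun j => m j = false), L j * |v j| :=
          (Finset.sum_filter _ _).symm
      _ ≤ ∑ j ∈ Finset.univ.filter (fun j => m j = false), L j * B :=
          Finset.sum_le_sum fun j _ => mul_le_mul_of_nonneg_left (hv j) (hL j)
      _ = (∑ j ∈ Finset.univ.filter (fun j => m j = false), L j) * B := by
          rw [Finset.sum_mul]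
      _ ≤ T' * B := mul_le_mul_of_nonneg_right
          (sum_le_top_sum L hL σ hσ N _ hNcard) hB.le
      _ = B * T' := mul_comm _ _
  -- abbreviations
  set c : (Fin d → Bool) → ℝ≥0∞ :=
    fun b' => if b' = allT then 1 else ENNReal.ofReal a with hcdef
  set c' : (Fin d → Bool) → ℝ≥0∞ :=
    fun b' => if b' = allT then 1 else ENNReal.ofReal a⁻¹ with hc'def
  set G : (Fin n → Fin d → Bool) → ℝ≥0∞ :=
    fun m => (∏ i ∈ Finset.univ.erase i₀, (F (z' i)) (m i)) *
      laplaceMech f b (fun i => maskSample ((z' i) : Fin d → ℝ)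
        (Function.update m i₀ allT i)) S with hGdef
  have hG : ∀ m m' : Fin n → Fin d → Bool, (∀ i, i ≠ i₀ → m i = m' i) → G m = G m' := by
    intro m m' hmm
    have h2 : Function.update m i₀ allT = Function.update m' i₀ allT := by
      funext i
      by_cases h : i = i₀
      · subst h; simp
      · rw [Function.update_of_ne h, Function.update_of_ne h, hmm i h]
    rw [hGdef]
    simp only [h2]
    congr 1
    exact Finset.prod_congr rfl fun i hi => by rw [hmm i (Finset.ne_of_mem_erase hi)]
  -- Step A: pointwise upper bound
  have stepA : ∀ m : Fin n → Fin d → Bool,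
      (∏ i, (F (z i)) (m i)) *
        laplaceMech f b (fun i => maskSample ((z i) : Fin d → ℝ) (m i)) S
      ≤ (F (z i₀)) (m i₀) * c (m i₀) * G m := by
    intro m
    have hprod : (∏ i, (F (z i)) (m i))
        = (F (z i₀)) (m i₀) * ∏ i ∈ Finset.univ.erase i₀, (F (z' i)) (m i) := by
      rw [← Finset.mul_prod_erase Finset.univ (fun i => (F (z i)) (m i)) (Finset.mem_univ i₀)]
      congr 1
      exact Finset.prod_congr rfl fun i hi => by rw [hnb i (Finset.ne_of_mem_erase hi)]
    by_cases h0 : (F (z i₀)) (m i₀) = 0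
    · rw [hprod, h0]; simp
    · have hsupc := hsupp (z i₀) (m i₀) h0
      by_cases hT : m i₀ = allT
      · have hDeq : (fun i => maskSample ((z i) : Fin d → ℝ) (m i))
            = (fun i => maskSample ((z' i) : Fin d → ℝ) (Function.update m i₀ allT i)) := by
          funext i
          by_cases h : i = i₀
          · subst h
            rw [Function.update_self, hT]
            funext j
            simp [maskSample, hallT]
          · rw [Function.update_of_ne h, hnb i h]
        rw [hprod, hDeq, hGdef]
        simp only [hT, hcdef, if_pos rfl, mul_one]
        exact le_of_eq (mul_assoc _ _ _)
      · have hgap := hdist ((z i₀) : Fin d → ℝ) (fun j => h𝒵 _ (z i₀).2 j)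
          ((z' i₀) : Fin d → ℝ) (m i₀) hsupc
        have hmeas : laplaceMech f b (fun i => maskSample ((z i) : Fin d → ℝ) (m i)) S
            ≤ ENNReal.ofReal a * laplaceMech f b
              (fun i => maskSample ((z' i) : Fin d → ℝ) (Function.update m i₀ allT i)) S := by
          refine hratio _ _ (fun i hi => by rw [Function.update_of_ne hi, hnb i hi]) ?_
          simpa [Function.update_self] using hgap
        rw [hprod, hGdef]
        simp only [hcdef, if_neg hT]
        calc ((F (z i₀)) (m i₀) * ∏ i ∈ Finset.univ.erase i₀, (F (z' i)) (m i)) *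
              laplaceMech f b (fun i => maskSample ((z i) : Fin d → ℝ) (m i)) S
            ≤ ((F (z i₀)) (m i₀) * ∏ i ∈ Finset.univ.erase i₀, (F (z' i)) (m i)) *
              (ENNReal.ofReal a * laplaceMech f b
                (fun i => maskSample ((z' i) : Fin d → ℝ)
                  (Function.update m i₀ allT i)) S) := mul_le_mul_right hmeas _
          _ = (F (z i₀)) (m i₀) * ENNReal.ofReal a *
              ((∏ i ∈ Finset.univ.erase i₀, (F (z' i)) (m i)) *
                laplaceMech f b (fun i => maskSample ((z' i) : Fin d → ℝ)
                  (Function.update m i₀ allT i)) S) := by ring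
  -- Step D: pointwise lower bound
  have stepD : ∀ m : Fin n → Fin d → Bool,
      (F (z' i₀)) (m i₀) * c' (m i₀) * G m
      ≤ (∏ i, (F (z' i)) (m i)) *
        laplaceMech f b (fun i => maskSample ((z' i) : Fin d → ℝ) (m i)) S := by
    intro m
    have hprod' : (∏ i, (F (z' i)) (m i))
        = (F (z' i₀)) (m i₀) * ∏ i ∈ Finset.univ.erase i₀, (F (z' i)) (m i) :=
      (Finset.mul_prod_erase Finset.univ _ (Finset.mem_univ i₀)).symm
    by_cases h0 : (F (z' i₀)) (m i₀) = 0
    · rw [h0]; simp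
    · by_cases hT : m i₀ = allT
      · have hup : Function.update m i₀ allT = m := by
          rw [← hT]; exact Function.update_eq_self i₀ m
        rw [hprod', hGdef]
        simp only [hup, hT, hc'def, if_pos rfl, mul_one]
        exact le_of_eq (mul_assoc _ _ _).symm
      · have hsupc := hsupp (z' i₀) (m i₀) h0
        have hgap := hdist ((z' i₀) : Fin d → ℝ) (fun j => h𝒵 _ (z' i₀).2 j)
          ((z' i₀) : Fin d → ℝ) (m i₀) hsupc
        have hmeas2 : laplaceMech f b
            (fun i => maskSample ((z' i) : Fin d → ℝ) (Function.update m i₀ allT i)) S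
            ≤ ENNReal.ofReal a *
              laplaceMech f b (fun i => maskSample ((z' i) : Fin d → ℝ) (m i)) S := by
          refine hratio _ _ (fun i hi => by rw [Function.update_of_ne hi]) ?_
          have : ∀ j, gap (maskSample ((z' i₀) : Fin d → ℝ) (Function.update m i₀ allT i₀) j)
              (maskSample ((z' i₀) : Fin d → ℝ) (m i₀) j)
              = gap (maskSample ((z' i₀) : Fin d → ℝ) (m i₀) j)
                (maskSample ((z' i₀) : Fin d → ℝ) allT j) := by
            intro j
            rw [Function.update_self, gap_comm]
          calc ∑ j, L j * gap (maskSample ((z' i₀) : Fin d → ℝ) (Function.update m i₀ allT i₀) j)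
                (maskSample ((z' i₀) : Fin d → ℝ) (m i₀) j)
              = ∑ j, L j * gap (maskSample ((z' i₀) : Fin d → ℝ) (m i₀) j)
                (maskSample ((z' i₀) : Fin d → ℝ) allT j) := by
                refine Finset.sum_congr rfl fun j _ => ?_
                rw [this j]
            _ ≤ B * T' := hgap
        have hkey : ENNReal.ofReal a⁻¹ * (laplaceMech f b
            (fun i => maskSample ((z' i) : Fin d → ℝ) (Function.update m i₀ allT i)) S)
            ≤ laplaceMech f b (fun i => maskSample ((z' i) : Fin d → ℝ) (m i)) S := by
          have h1 := mul_le_mul_right hmeas2 (ENNReal.ofReal a⁻¹)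
          rw [← mul_assoc, ← ENNReal.ofReal_mul (inv_nonneg.2 ha0.le),
            inv_mul_cancel₀ ha0.ne', ENNReal.ofReal_one, one_mul] at h1
          exact h1
        rw [hprod', hGdef]
        simp only [hc'def, if_neg hT]
        calc (F (z' i₀)) (m i₀) * ENNReal.ofReal a⁻¹ *
            ((∏ i ∈ Finset.univ.erase i₀, (F (z' i)) (m i)) *
              laplaceMech f b (fun i => maskSample ((z' i) : Fin d → ℝ)
                (Function.update m i₀ allT i)) S)
            = ((F (z' i₀)) (m i₀) * ∏ i ∈ Finset.univ.erase i₀, (F (z' i)) (m i)) *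
              (ENNReal.ofReal a⁻¹ *
                laplaceMech f b (fun i => maskSample ((z' i) : Fin d → ℝ)
                  (Function.update m i₀ allT i)) S) := by ring
          _ ≤ ((F (z' i₀)) (m i₀) * ∏ i ∈ Finset.univ.erase i₀, (F (z' i)) (m i)) *
              laplaceMech f b (fun i => maskSample ((z' i) : Fin d → ℝ) (m i)) S :=
              mul_le_mul_right hkey _
  -- summed coefficients
  have hsumgen : ∀ (v : 𝒵) (x : ℝ≥0∞),
      ∑ b' : Fin d → Bool, (F v) b' * (if b' = allT then 1 else x)
        = ENNReal.ofReal (1 - p) + ENNReal.ofReal p * x := by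
    intro v x
    have htot : ∑ b' : Fin d → Bool, (F v) b' = 1 := by
      have h := (F v).tsum_coe
      rwa [tsum_fintype] at h
    have hvT : (F v) allT = ENNReal.ofReal (1 - p) := by
      rw [← hpstar v, ENNReal.ofReal_toReal (PMF.apply_ne_top _ _)]
    have hrest : ∑ b' ∈ Finset.univ.erase allT, (F v) b' = ENNReal.ofReal p := by
      have h := Finset.add_sum_erase Finset.univ (fun b' => (F v) b') (Finset.mem_univ allT)
      beta_reduce at h
      rw [htot, hvT] at h
      have h2 : ENNReal.ofReal (1 - p) + ENNReal.ofReal p = 1 := by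
        rw [← ENNReal.ofReal_add (by linarith) hp0]
        norm_num
      rw [← h2] at h
      exact ((ENNReal.add_right_inj ENNReal.ofReal_ne_top).mp h)
    rw [← Finset.add_sum_erase Finset.univ _ (Finset.mem_univ allT), if_pos rfl, mul_one, hvT]
    congr 1
    calc ∑ b' ∈ Finset.univ.erase allT, (F v) b' * (if b' = allT then 1 else x)
        = ∑ b' ∈ Finset.univ.erase allT, (F v) b' * x :=
          Finset.sum_congr rfl fun b' hb' => by rw [if_neg (Finset.ne_of_mem_erase hb')]
      _ = (∑ b' ∈ Finset.univ.erase allT, (F v) b') * x := (Finset.sum_mul _ _ _).symm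
      _ = ENNReal.ofReal p * x := by rw [hrest]
  -- the scalar inequality
  have haa : a * a = Real.exp eps0 := by
    rw [hadef, ← Real.exp_add]
    congr 1
    ring
  have hKpos : (0:ℝ) < 1 + p * (Real.exp eps0 - 1) := by
    have h1 : 1 ≤ Real.exp eps0 := Real.one_le_exp heps00
    nlinarith
  have hKval : Real.exp (Real.log (1 + p * (Real.exp eps0 - 1)))
      = 1 + p * (a * a - 1) := by
    rw [Real.exp_log hKpos, haa]
  have hineq : (1 - p) + p * a
      ≤ Real.exp (Real.log (1 + p * (Real.exp eps0 - 1))) * ((1 - p) + p * a⁻¹) := by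
    rw [hKval]
    have hainv : a * a⁻¹ = 1 := mul_inv_cancel₀ ha0.ne'
    have key : 0 ≤ p * (1 - p) * ((a - 1) ^ 2 * (a + 1)) :=
      mul_nonneg (mul_nonneg hp0 (by linarith))
        (mul_nonneg (sq_nonneg _) (by linarith))
    have H2 : a * ((1 - p) + p * a)
        ≤ a * ((1 + p * (a * a - 1)) * ((1 - p) + p * a⁻¹)) := by
      have expand : a * ((1 + p * (a * a - 1)) * ((1 - p) + p * a⁻¹))
          = (1 + p * (a * a - 1)) * (a * (1 - p) + p * (a * a⁻¹)) := by ring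
      rw [expand, hainv]
      nlinarith [key]
    exact le_of_mul_le_mul_left H2 ha0
  -- ENNReal form of coefficients
  have hcoefU : ENNReal.ofReal (1 - p) + ENNReal.ofReal p * ENNReal.ofReal a
      = ENNReal.ofReal ((1 - p) + p * a) := by
    rw [← ENNReal.ofReal_mul hp0, ← ENNReal.ofReal_add (by linarith) (by positivity)]
  have hcoefL : ENNReal.ofReal (1 - p) + ENNReal.ofReal p * ENNReal.ofReal a⁻¹
      = ENNReal.ofReal ((1 - p) + p * a⁻¹) := by
    rw [← ENNReal.ofReal_mul hp0, ← ENNReal.ofReal_add (by linarith) (by positivity)]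
  have hscalar : ENNReal.ofReal (1 - p) + ENNReal.ofReal p * ENNReal.ofReal a
      ≤ ENNReal.ofReal (Real.exp (Real.log (1 + p * (Real.exp eps0 - 1)))) *
        (ENNReal.ofReal (1 - p) + ENNReal.ofReal p * ENNReal.ofReal a⁻¹) := by
    rw [hcoefU, hcoefL, ← ENNReal.ofReal_mul (Real.exp_nonneg _)]
    exact ENNReal.ofReal_le_ofReal hineq
  -- assemble
  calc ∑ m : Fin n → Fin d → Bool, (∏ i, (F (z i)) (m i)) *
        laplaceMech f b (fun i => maskSample ((z i) : Fin d → ℝ) (m i)) S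
      ≤ ∑ m : Fin n → Fin d → Bool, (F (z i₀)) (m i₀) * c (m i₀) * G m :=
        Finset.sum_le_sum fun m _ => stepA m
    _ = ∑ m : Fin n → Fin d → Bool, (fun b' => (F (z i₀)) b' * c b') (m i₀) * G m := rfl
    _ = (∑ b', (F (z i₀)) b' * c b') *
        ∑ m : Fin n → Fin d → Bool, (if m i₀ = allT then G m else 0) :=
        sum_split i₀ (fun b' => (F (z i₀)) b' * c b') G hG allT
    _ = (ENNReal.ofReal (1 - p) + ENNReal.ofReal p * ENNReal.ofReal a) *
        ∑ m : Fin n → Fin d → Bool, (if m i₀ = allT then G m else 0) := by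
        rw [hcdef, hsumgen (z i₀) (ENNReal.ofReal a)]
    _ ≤ (ENNReal.ofReal (Real.exp (Real.log (1 + p * (Real.exp eps0 - 1)))) *
        (ENNReal.ofReal (1 - p) + ENNReal.ofReal p * ENNReal.ofReal a⁻¹)) *
        ∑ m : Fin n → Fin d → Bool, (if m i₀ = allT then G m else 0) :=
        mul_le_mul_left hscalar _
    _ = ENNReal.ofReal (Real.exp (Real.log (1 + p * (Real.exp eps0 - 1)))) *
        ((∑ b', (F (z' i₀)) b' * c' b') *
          ∑ m : Fin n → Fin d → Bool, (if m i₀ = allT then G m else 0)) := by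
        rw [hc'def, hsumgen (z' i₀) (ENNReal.ofReal a⁻¹), mul_assoc]
    _ = ENNReal.ofReal (Real.exp (Real.log (1 + p * (Real.exp eps0 - 1)))) *
        (∑ m : Fin n → Fin d → Bool, (F (z' i₀)) (m i₀) * c' (m i₀) * G m) := by
        rw [← sum_split i₀ (fun b' => (F (z' i₀)) b' * c' b') G hG allT]
    _ ≤ ENNReal.ofReal (Real.exp (Real.log (1 + p * (Real.exp eps0 - 1)))) *
        (∑ m : Fin n → Fin d → Bool, (∏ i, (F (z' i)) (m i)) *
          laplaceMech f b (fun i => maskSample ((z' i) : Fin d → ℝ) (m i)) S) :=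
        mul_le_mul_right (Finset.sum_le_sum fun m _ => stepD m) _
end

section
/- Under the hypotheses of the Laplace amplification theorem (MAR mechanism 𝒟 with partial-observation probability p⋆, support observing at most a fraction ρ of features per record with ρd ∈ ℕ, FWL query w.r.t. ℓ₁ with all constants L_j equal, Laplace mechanism with scale b = C₁/ε), and for ε ∈ (0,1], the composed algorithm 𝒜ᴸ_𝒟 is (ε'₀, 0)-differentially private with ε'₀ ≤ min((e − 1)·p⋆, 1)·ρ·ε. -/
open MeasureTheory
open scoped ENNReal

lemma exp_le_linear {x : ℝ} (h0 : 0 ≤ x) (h1 : x ≤ 1) :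
    Real.exp x ≤ 1 + (Real.exp 1 - 1) * x := by
  have h := convexOn_exp.2 (Set.mem_univ (0:ℝ)) (Set.mem_univ (1:ℝ))
    (by linarith : (0:ℝ) ≤ 1 - x) h0 (by ring)
  simp only [smul_eq_mul, mul_zero, mul_one, zero_add, Real.exp_zero] at h
  linarith

lemma scalar_key (p c : ℝ) (hp0 : 0 ≤ p) (hp1 : p ≤ 1) (hc0 : 0 ≤ c) (hc1 : 2 * c ≤ 1) :
    (1 - p) + p * Real.exp c ≤
      Real.exp (min ((Real.exp 1 - 1) * p) 1 * (2 * c)) * ((1 - p) + p * Real.exp (-c)) := by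
  have hee : Real.exp (-c) * Real.exp (2 * c) = Real.exp c := by
    rw [← Real.exp_add]; ring_nf
  have hxy : Real.exp c * Real.exp (-c) = 1 := by
    rw [← Real.exp_add]; simp
  have hE2 : Real.exp (2 * c) = Real.exp c * Real.exp c := by
    rw [← Real.exp_add]; ring_nf
  have h1c : 1 ≤ Real.exp c := Real.one_le_exp hc0
  have hecpos : 0 < Real.exp (-c) := Real.exp_pos _
  have heclt : Real.exp (-c) ≤ 1 := Real.exp_le_one_iff.mpr (by linarith)
  have hxy2 : Real.exp c + Real.exp (-c) - 2 ≥ 0 := by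
    nlinarith [mul_nonneg (sub_nonneg.2 h1c) (sub_nonneg.2 heclt), hxy]
  have hkey : Real.exp c * Real.exp c - 1 - Real.exp c + Real.exp (-c) ≥ 0 := by
    nlinarith [sq_nonneg (Real.exp c - 1), hxy2]
  rcases min_cases ((Real.exp 1 - 1) * p) 1 with ⟨hmin, hle⟩ | ⟨hmin, hle⟩ <;> rw [hmin]
  · have h2c : Real.exp (2 * c) ≤ 1 + (Real.exp 1 - 1) * (2 * c) :=
      exp_le_linear (by linarith) hc1
    have he1 : 1 + (Real.exp 1 - 1) * p * (2 * c) ≤ Real.exp ((Real.exp 1 - 1) * p * (2 * c)) := by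
      have := Real.add_one_le_exp ((Real.exp 1 - 1) * p * (2 * c)); linarith
    have hx2y : Real.exp c * Real.exp c * Real.exp (-c) = Real.exp c := by
      rw [mul_assoc, hxy, mul_one]
    have hpx2y : p * p * (Real.exp c * Real.exp c * Real.exp (-c)) = p * p * Real.exp c := by
      rw [hx2y]
    have hmid : (1 - p) + p * Real.exp c ≤
        (1 + p * (Real.exp c * Real.exp c - 1)) * ((1 - p) + p * Real.exp (-c)) := by
      nlinarith [mul_nonneg (mul_nonneg hp0 (sub_nonneg.2 hp1)) hkey, hpx2y]
    rw [← hE2] at hmid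
    have hstep : (1 + p * (Real.exp (2 * c) - 1)) ≤ Real.exp ((Real.exp 1 - 1) * p * (2 * c)) := by
      have h3 := mul_le_mul_of_nonneg_left
        (by linarith : Real.exp (2 * c) - 1 ≤ (Real.exp 1 - 1) * (2 * c)) hp0
      nlinarith [h3, he1]
    have hpos2 : 0 ≤ (1 - p) + p * Real.exp (-c) := by nlinarith
    calc (1 - p) + p * Real.exp c
        ≤ (1 + p * (Real.exp (2 * c) - 1)) * ((1 - p) + p * Real.exp (-c)) := hmid
      _ ≤ Real.exp ((Real.exp 1 - 1) * p * (2 * c)) * ((1 - p) + p * Real.exp (-c)) :=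
          mul_le_mul_of_nonneg_right hstep hpos2
  · rw [one_mul]
    have h2 : 1 ≤ Real.exp (2 * c) := Real.one_le_exp (by linarith)
    have hpy : p * (Real.exp (-c) * Real.exp (2 * c)) = p * Real.exp c := by rw [hee]
    nlinarith [mul_nonneg (by linarith : (0:ℝ) ≤ Real.exp (2 * c) - 1)
      (by linarith : (0:ℝ) ≤ 1 - p), hpy]

lemma lap_ratio {d n k : ℕ} (f : (Fin n → (Fin d → Option ℝ)) → Fin k → ℝ) (b Δ : ℝ)
    (hb : 0 < b) (D D' : Fin n → (Fin d → Option ℝ))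
    (hsens : ∑ r, |f D r - f D' r| ≤ Δ) (S : Set (Fin k → ℝ)) (hS : MeasurableSet S) :
    laplaceMech f b D S ≤ ENNReal.ofReal (Real.exp (Δ / b)) * laplaceMech f b D' S := by
  unfold laplaceMech
  rw [withDensity_apply _ hS, withDensity_apply _ hS,
    ← lintegral_const_mul' _ _ ENNReal.ofReal_ne_top]
  refine lintegral_mono fun t => ?_
  rw [← ENNReal.ofReal_mul (Real.exp_nonneg _)]
  apply ENNReal.ofReal_le_ofReal
  have htri : ∑ r, |t r - f D' r| ≤ (∑ r, |t r - f D r|) + ∑ r, |f D r - f D' r| := by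
    rw [← Finset.sum_add_distrib]
    exact Finset.sum_le_sum fun r _ => abs_sub_le (t r) (f D r) (f D' r)
  have hexp : Real.exp (-(∑ r, |t r - f D r|) / b) ≤
      Real.exp (Δ / b) * Real.exp (-(∑ r, |t r - f D' r|) / b) := by
    rw [← Real.exp_add]
    apply Real.exp_le_exp.2
    rw [← add_div]
    apply (div_le_div_iff_of_pos_right hb).2
    linarith
  have hp : (0:ℝ) ≤ (1 / (2 * b)) ^ k := by positivity
  calc (1 / (2 * b)) ^ k * Real.exp (-(∑ r, |t r - f D r|) / b)
      ≤ (1 / (2 * b)) ^ k * (Real.exp (Δ / b) * Real.exp (-(∑ r, |t r - f D' r|) / b)) :=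
        mul_le_mul_of_nonneg_left hexp hp
    _ = Real.exp (Δ / b) * ((1 / (2 * b)) ^ k * Real.exp (-(∑ r, |t r - f D' r|) / b)) := by ring


/-- quantified Laplace amplification. Under the hypotheses of the
Laplace amplification theorem with all FWL constants equal (`L_j = Lc`) and `ρd ∈ ℕ`,
for `ε ∈ (0,1]` the composed algorithm `𝒜ᴸ_𝒟` is `(ε'₀, 0)`-differentially private with
`ε'₀ ≤ min((e − 1)·p⋆, 1)·ρ·ε`. -/
theorem laplace_amplification_cor {d n k : ℕ} (ε B ρ p Lc : ℝ)
    (hε0 : 0 < ε) (hε1 : ε ≤ 1) (hB : 0 < B) (hρ : 0 < ρ) (hρ1 : ρ ≤ 1)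
    (hp0 : 0 ≤ p) (hp1 : p ≤ 1) (hLc : 0 ≤ Lc)
    (hρd : ∃ m : ℕ, (m : ℝ) = ρ * d)
    (𝒵 : Set (Fin d → ℝ)) (h𝒵 : ∀ v ∈ 𝒵, ∀ j, |v j| ≤ B)
    (F : 𝒵 → PMF (Fin d → Bool)) (hMAR : IsMAR F)
    (hsupp : ∀ (z : 𝒵) (m : Fin d → Bool), (F z) m ≠ 0 →
      ((Finset.univ.filter fun j => m j = false).card : ℝ) ≤ ρ * d)
    (hpstar : ∀ z : 𝒵, ((F z) (fun _ => true)).toReal = 1 - p)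
    (f : (Fin n → (Fin d → Option ℝ)) → Fin k → ℝ)
    (hFWL : FWL1 f (fun _ => Lc)) :
    ∃ ε'₀ : ℝ, ε'₀ ≤ min ((Real.exp 1 - 1) * p) 1 * (ρ * ε) ∧
      ∀ (z z' : Fin n → 𝒵), (∃ i₀, ∀ i, i ≠ i₀ → z i = z' i) →
      ∀ S : Set (Fin k → ℝ), MeasurableSet S →
        (∑ m : Fin n → Fin d → Bool, (∏ i, (F (z i)) (m i)) *
            laplaceMech f (2 * B * (d * Lc) / ε)
              (fun i => maskSample ((z i) : Fin d → ℝ) (m i)) S)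
          ≤ ENNReal.ofReal (Real.exp ε'₀) *
            (∑ m : Fin n → Fin d → Bool, (∏ i, (F (z' i)) (m i)) *
              laplaceMech f (2 * B * (d * Lc) / ε)
                (fun i => maskSample ((z' i) : Fin d → ℝ) (m i)) S) := by
  classical
  refine ⟨min ((Real.exp 1 - 1) * p) 1 * (ρ * ε), le_refl _, ?_⟩
  rintro z z' ⟨i₀, hzz⟩ S hS
  have hρε0 : 0 ≤ ρ * ε := le_of_lt (mul_pos hρ hε0)
  have hρε1 : ρ * ε ≤ 1 := by nlinarith
  have hmin0 : 0 ≤ min ((Real.exp 1 - 1) * p) 1 := by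
    refine le_min (mul_nonneg ?_ hp0) zero_le_one
    have := Real.one_le_exp (le_of_lt one_pos)
    linarith
  have hε'0 : 0 ≤ min ((Real.exp 1 - 1) * p) 1 * (ρ * ε) := mul_nonneg hmin0 hρε0
  set E' := ENNReal.ofReal (Real.exp (min ((Real.exp 1 - 1) * p) 1 * (ρ * ε))) with hE'def
  have hone : (1:ℝ≥0∞) ≤ E' := by
    rw [hE'def, ENNReal.one_le_ofReal]
    exact Real.one_le_exp hε'0
  set b := 2 * B * ((d:ℝ) * Lc) / ε with hbdef
  by_cases hdeg : (d:ℝ) * Lc = 0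
  · -- degenerate case : the Laplace measure does not depend on the dataset
    have hb0 : b = 0 := by rw [hbdef, hdeg]; simp
    have hconst : ∀ D D' : Fin n → (Fin d → Option ℝ),
        laplaceMech f b D = laplaceMech f b D' := by
      intro D D'
      unfold laplaceMech
      rw [hb0]
      simp [div_zero]
    have hsum1 : ∀ w : Fin n → 𝒵,
        (∑ m : Fin n → Fin d → Bool, ∏ i, (F (w i)) (m i)) = 1 := by
      intro w
      rw [← Fintype.piFinset_univ, ← Finset.prod_univ_sum]
      have h1 : ∀ i : Fin n, ∑ a : Fin d → Bool, (F (w i)) a = 1 := by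
        intro i
        rw [← tsum_fintype (L := .unconditional _)]
        exact (F (w i)).tsum_coe
      simp [h1]
    set D₀ : Fin n → Fin d → Option ℝ := fun _ _ => none with hD₀
    have hLHS : (∑ m : Fin n → Fin d → Bool, (∏ i, (F (z i)) (m i)) *
        laplaceMech f b (fun i => maskSample ((z i) : Fin d → ℝ) (m i)) S)
        = laplaceMech f b D₀ S := by
      calc (∑ m : Fin n → Fin d → Bool, (∏ i, (F (z i)) (m i)) *
            laplaceMech f b (fun i => maskSample ((z i) : Fin d → ℝ) (m i)) S)
          = ∑ m : Fin n → Fin d → Bool, (∏ i, (F (z i)) (m i)) * laplaceMech f b D₀ S :=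
            Finset.sum_congr rfl fun m _ => by rw [hconst _ D₀]
        _ = (∑ m : Fin n → Fin d → Bool, ∏ i, (F (z i)) (m i)) * laplaceMech f b D₀ S :=
            (Finset.sum_mul _ _ _).symm
        _ = laplaceMech f b D₀ S := by rw [hsum1 z, one_mul]
    have hRHS : (∑ m : Fin n → Fin d → Bool, (∏ i, (F (z' i)) (m i)) *
        laplaceMech f b (fun i => maskSample ((z' i) : Fin d → ℝ) (m i)) S)
        = laplaceMech f b D₀ S := by
      calc (∑ m : Fin n → Fin d → Bool, (∏ i, (F (z' i)) (m i)) *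
            laplaceMech f b (fun i => maskSample ((z' i) : Fin d → ℝ) (m i)) S)
          = ∑ m : Fin n → Fin d → Bool, (∏ i, (F (z' i)) (m i)) * laplaceMech f b D₀ S :=
            Finset.sum_congr rfl fun m _ => by rw [hconst _ D₀]
        _ = (∑ m : Fin n → Fin d → Bool, ∏ i, (F (z' i)) (m i)) * laplaceMech f b D₀ S :=
            (Finset.sum_mul _ _ _).symm
        _ = laplaceMech f b D₀ S := by rw [hsum1 z', one_mul]
    rw [hLHS, hRHS]
    exact le_mul_of_one_le_left zero_le hone
  · -- main case
    have hd0 : (d:ℝ) ≠ 0 := fun h => hdeg (by rw [h]; ring)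
    have hLc0 : Lc ≠ 0 := fun h => hdeg (by rw [h]; ring)
    have hdpos : (0:ℝ) < d := lt_of_le_of_ne (Nat.cast_nonneg d) (Ne.symm hd0)
    have hLcpos : 0 < Lc := lt_of_le_of_ne hLc (Ne.symm hLc0)
    have hbpos : 0 < b := by rw [hbdef]; positivity
    set c := ρ * ε / 2 with hcdef
    have hc0 : 0 ≤ c := by rw [hcdef]; positivity
    have h2c : 2 * c = ρ * ε := by rw [hcdef]; ring
    set Δ := Lc * B * (ρ * (d:ℝ)) with hΔdef
    have hΔb : Δ / b = c := by
      rw [hΔdef, hbdef, hcdef]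
      field_simp
    set T : Fin d → Bool := fun _ => true with hTdef
    set e := Equiv.funSplitAt i₀ (Fin d → Bool) with hedef
    have hMi : ∀ (a : Fin d → Bool) (g : {j // j ≠ i₀} → Fin d → Bool),
        e.symm (a, g) i₀ = a := by
      intro a g; rw [hedef]; simp
    have hMT : ∀ (a : Fin d → Bool) (g : {j // j ≠ i₀} → Fin d → Bool) (i : Fin n),
        i ≠ i₀ → e.symm (a, g) i = e.symm (T, g) i := by
      intro a g i hi; rw [hedef]; simp [hi]
    -- the T-masked datasets of z and z' coincide
    have hdatT : ∀ g : {j // j ≠ i₀} → Fin d → Bool,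
        (fun i => maskSample ((z i) : Fin d → ℝ) (e.symm (T, g) i)) =
        (fun i => maskSample ((z' i) : Fin d → ℝ) (e.symm (T, g) i)) := by
      intro g
      funext i
      by_cases hi : i = i₀
      · subst hi
        rw [hMi]
        funext j
        simp [maskSample, hTdef]
      · rw [hzz i hi]
    -- sensitivity bound
    have hsens : ∀ (w : Fin n → 𝒵) (a : Fin d → Bool) (g : {j // j ≠ i₀} → Fin d → Bool),
        (F (w i₀)) a ≠ 0 →
        ∑ r, |f (fun i => maskSample ((w i) : Fin d → ℝ) (e.symm (a, g) i)) r -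
              f (fun i => maskSample ((w i) : Fin d → ℝ) (e.symm (T, g) i)) r| ≤ Δ := by
      intro w a g hne
      refine le_trans (hFWL _ _ i₀ ?_) ?_
      · intro i hi
        rw [hMT a g i hi]
      · rw [hMi, hMi]
        have hgap : ∀ j, (fun _ : Fin d => Lc) j *
            gap (maskSample ((w i₀) : Fin d → ℝ) a j) (maskSample ((w i₀) : Fin d → ℝ) T j)
            ≤ Lc * (if a j = false then B else 0) := by
          intro j
          simp only
          apply mul_le_mul_of_nonneg_left _ hLc
          cases haj : a j
          · simp only [haj, if_pos rfl]
            simp [gap, maskSample, haj, hTdef]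
            exact h𝒵 ((w i₀) : Fin d → ℝ) (w i₀).2 j
          · simp [gap, maskSample, haj, hTdef]
        calc ∑ j, (fun _ : Fin d => Lc) j *
              gap (maskSample ((w i₀) : Fin d → ℝ) a j) (maskSample ((w i₀) : Fin d → ℝ) T j)
            ≤ ∑ j, Lc * (if a j = false then B else 0) := Finset.sum_le_sum fun j _ => hgap j
          _ = Lc * ∑ j, (if a j = false then B else 0) := by rw [Finset.mul_sum]
          _ = Lc * (((Finset.univ.filter fun j => a j = false).card : ℝ) * B) := by
              rw [← Finset.sum_filter, Finset.sum_const, nsmul_eq_mul]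
          _ ≤ Δ := by
              rw [hΔdef]
              have hcard := hsupp (w i₀) a hne
              have hBL : 0 ≤ Lc * B := mul_nonneg hLc (le_of_lt hB)
              nlinarith [hcard, mul_le_mul_of_nonneg_left hcard hBL]
    -- ratio bounds
    have hup : ∀ (w : Fin n → 𝒵) (a : Fin d → Bool) (g : {j // j ≠ i₀} → Fin d → Bool),
        (F (w i₀)) a ≠ 0 →
        laplaceMech f b (fun i => maskSample ((w i) : Fin d → ℝ) (e.symm (a, g) i)) S ≤
        ENNReal.ofReal (Real.exp c) *
          laplaceMech f b (fun i => maskSample ((w i) : Fin d → ℝ) (e.symm (T, g) i)) S := by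
      intro w a g hne
      have h := lap_ratio f b Δ hbpos _ _ (hsens w a g hne) S hS
      rwa [hΔb] at h
    have hdown : ∀ (w : Fin n → 𝒵) (a : Fin d → Bool) (g : {j // j ≠ i₀} → Fin d → Bool),
        (F (w i₀)) a ≠ 0 →
        ENNReal.ofReal (Real.exp (-c)) *
          laplaceMech f b (fun i => maskSample ((w i) : Fin d → ℝ) (e.symm (T, g) i)) S ≤
        laplaceMech f b (fun i => maskSample ((w i) : Fin d → ℝ) (e.symm (a, g) i)) S := by
      intro w a g hne
      have hsens' : ∑ r, |f (fun i => maskSample ((w i) : Fin d → ℝ) (e.symm (T, g) i)) r -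
            f (fun i => maskSample ((w i) : Fin d → ℝ) (e.symm (a, g) i)) r| ≤ Δ := by
        refine le_trans (le_of_eq (Finset.sum_congr rfl fun r _ => abs_sub_comm _ _)) ?_
        exact hsens w a g hne
      have h := lap_ratio f b Δ hbpos _ _ hsens' S hS
      rw [hΔb] at h
      calc ENNReal.ofReal (Real.exp (-c)) *
            laplaceMech f b (fun i => maskSample ((w i) : Fin d → ℝ) (e.symm (T, g) i)) S
          ≤ ENNReal.ofReal (Real.exp (-c)) * (ENNReal.ofReal (Real.exp c) *
            laplaceMech f b (fun i => maskSample ((w i) : Fin d → ℝ) (e.symm (a, g) i)) S) :=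
            mul_le_mul_right h _
        _ = laplaceMech f b (fun i => maskSample ((w i) : Fin d → ℝ) (e.symm (a, g) i)) S := by
            rw [← mul_assoc, ← ENNReal.ofReal_mul (Real.exp_nonneg _), ← Real.exp_add]
            simp
    -- PMF facts
    have hT1 : ∀ w : 𝒵, (F w) T = ENNReal.ofReal (1 - p) := by
      intro w
      rw [hTdef, ← hpstar w]
      exact (ENNReal.ofReal_toReal ((F w).apply_ne_top _)).symm
    have hrest : ∀ w : 𝒵, ∑ a ∈ Finset.univ.erase T, (F w) a = ENNReal.ofReal p := by
      intro w
      have htot : ∑ a : Fin d → Bool, (F w) a = 1 := by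
        rw [← tsum_fintype (L := .unconditional _)]; exact (F w).tsum_coe
      have hsplit := Finset.add_sum_erase Finset.univ (F w) (Finset.mem_univ T)
      rw [htot, hT1 w] at hsplit
      have h1 : (1:ℝ≥0∞) = ENNReal.ofReal (1 - p) + ENNReal.ofReal p := by
        rw [← ENNReal.ofReal_add (by linarith) hp0]
        norm_num
      rw [h1] at hsplit
      exact (ENNReal.add_right_inj ENNReal.ofReal_ne_top).1 hsplit
    -- reshaping
    have hre : ∀ t : (Fin n → Fin d → Bool) → ℝ≥0∞,
        ∑ m : Fin n → Fin d → Bool, t m =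
        ∑ g : {j // j ≠ i₀} → Fin d → Bool, ∑ a : Fin d → Bool, t (e.symm (a, g)) := by
      intro t
      calc ∑ m : Fin n → Fin d → Bool, t m
          = ∑ x : (Fin d → Bool) × ({j // j ≠ i₀} → Fin d → Bool), t (e.symm x) :=
            (Equiv.sum_comp e.symm t).symm
        _ = ∑ a : Fin d → Bool, ∑ g : {j // j ≠ i₀} → Fin d → Bool, t (e.symm (a, g)) :=
            Fintype.sum_prod_type _
        _ = ∑ g : {j // j ≠ i₀} → Fin d → Bool, ∑ a : Fin d → Bool, t (e.symm (a, g)) :=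
            Finset.sum_comm
    have hprod : ∀ (w : Fin n → 𝒵) (a : Fin d → Bool) (g : {j // j ≠ i₀} → Fin d → Bool),
        (∏ i, (F (w i)) (e.symm (a, g) i)) =
        (F (w i₀)) a * ∏ i ∈ ({i₀}ᶜ : Finset (Fin n)), (F (w i)) (e.symm (T, g) i) := by
      intro w a g
      rw [Fintype.prod_eq_mul_prod_compl i₀, hMi]
      congr 1
      refine Finset.prod_congr rfl fun i hi => ?_
      have hine : i ≠ i₀ := by simpa using hi
      rw [hMT a g i hine]
    have hshape : ∀ w : Fin n → 𝒵,
        (∑ m : Fin n → Fin d → Bool, (∏ i, (F (w i)) (m i)) *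
          laplaceMech f b (fun i => maskSample ((w i) : Fin d → ℝ) (m i)) S) =
        ∑ g : {j // j ≠ i₀} → Fin d → Bool,
          (∏ i ∈ ({i₀}ᶜ : Finset (Fin n)), (F (w i)) (e.symm (T, g) i)) *
          ∑ a : Fin d → Bool, (F (w i₀)) a *
            laplaceMech f b (fun i => maskSample ((w i) : Fin d → ℝ) (e.symm (a, g) i)) S := by
      intro w
      rw [hre]
      refine Finset.sum_congr rfl fun g _ => ?_
      rw [Finset.mul_sum]
      refine Finset.sum_congr rfl fun a _ => ?_
      rw [hprod w a g]
      ring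
    -- per-g upper bound for z
    set Kp := ENNReal.ofReal (1 - p) + ENNReal.ofReal p * ENNReal.ofReal (Real.exp c) with hKp
    set Km := ENNReal.ofReal (1 - p) + ENNReal.ofReal p * ENNReal.ofReal (Real.exp (-c)) with hKm
    have hKscalar : Kp ≤ E' * Km := by
      have h := scalar_key p c hp0 hp1 hc0 (by rw [h2c]; exact hρε1)
      rw [h2c] at h
      calc Kp = ENNReal.ofReal ((1 - p) + p * Real.exp c) := by
            rw [hKp, ENNReal.ofReal_add (by linarith) (by positivity), ENNReal.ofReal_mul hp0]
        _ ≤ ENNReal.ofReal (Real.exp (min ((Real.exp 1 - 1) * p) 1 * (ρ * ε)) *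
              ((1 - p) + p * Real.exp (-c))) := ENNReal.ofReal_le_ofReal h
        _ = E' * Km := by
            rw [hE'def, hKm, ENNReal.ofReal_mul (Real.exp_nonneg _),
              ENNReal.ofReal_add (by linarith) (by positivity), ENNReal.ofReal_mul hp0]
    have hgup : ∀ g : {j // j ≠ i₀} → Fin d → Bool,
        (∑ a : Fin d → Bool, (F (z i₀)) a *
          laplaceMech f b (fun i => maskSample ((z i) : Fin d → ℝ) (e.symm (a, g) i)) S) ≤
        Kp * laplaceMech f b (fun i => maskSample ((z i) : Fin d → ℝ) (e.symm (T, g) i)) S := by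
      intro g
      rw [← Finset.add_sum_erase _ _ (Finset.mem_univ T)]
      have hrhs : Kp * laplaceMech f b
            (fun i => maskSample ((z i) : Fin d → ℝ) (e.symm (T, g) i)) S =
          ENNReal.ofReal (1 - p) * laplaceMech f b
            (fun i => maskSample ((z i) : Fin d → ℝ) (e.symm (T, g) i)) S +
          ∑ a ∈ Finset.univ.erase T, (F (z i₀)) a * (ENNReal.ofReal (Real.exp c) *
            laplaceMech f b (fun i => maskSample ((z i) : Fin d → ℝ) (e.symm (T, g) i)) S) := by
        rw [← Finset.sum_mul, hrest (z i₀), hKp]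
        ring
      rw [hrhs]
      apply add_le_add
      · rw [hT1 (z i₀)]
      · refine Finset.sum_le_sum fun a _ => ?_
        by_cases hz0 : (F (z i₀)) a = 0
        · rw [hz0]; simp
        · exact mul_le_mul_right (hup z a g hz0) _
    have hgdown : ∀ g : {j // j ≠ i₀} → Fin d → Bool,
        Km * laplaceMech f b (fun i => maskSample ((z' i) : Fin d → ℝ) (e.symm (T, g) i)) S ≤
        ∑ a : Fin d → Bool, (F (z' i₀)) a *
          laplaceMech f b (fun i => maskSample ((z' i) : Fin d → ℝ) (e.symm (a, g) i)) S := by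
      intro g
      rw [← Finset.add_sum_erase _ _ (Finset.mem_univ T)]
      have hlhs : Km * laplaceMech f b
            (fun i => maskSample ((z' i) : Fin d → ℝ) (e.symm (T, g) i)) S =
          ENNReal.ofReal (1 - p) * laplaceMech f b
            (fun i => maskSample ((z' i) : Fin d → ℝ) (e.symm (T, g) i)) S +
          ∑ a ∈ Finset.univ.erase T, (F (z' i₀)) a * (ENNReal.ofReal (Real.exp (-c)) *
            laplaceMech f b (fun i => maskSample ((z' i) : Fin d → ℝ) (e.symm (T, g) i)) S) := by
        rw [← Finset.sum_mul, hrest (z' i₀), hKm]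
        ring
      rw [hlhs]
      apply add_le_add
      · rw [hT1 (z' i₀)]
      · refine Finset.sum_le_sum fun a _ => ?_
        by_cases hz0 : (F (z' i₀)) a = 0
        · rw [hz0]; simp
        · exact mul_le_mul_right (hdown z' a g hz0) _
    -- put it together
    rw [hshape z, hshape z', Finset.mul_sum]
    refine Finset.sum_le_sum fun g _ => ?_
    have hPzz' : (∏ i ∈ ({i₀}ᶜ : Finset (Fin n)), (F (z i)) (e.symm (T, g) i)) =
        ∏ i ∈ ({i₀}ᶜ : Finset (Fin n)), (F (z' i)) (e.symm (T, g) i) := by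
      refine Finset.prod_congr rfl fun i hi => ?_
      have hine : i ≠ i₀ := by simpa using hi
      rw [hzz i hine]
    rw [hPzz']
    calc (∏ i ∈ ({i₀}ᶜ : Finset (Fin n)), (F (z' i)) (e.symm (T, g) i)) *
          ∑ a : Fin d → Bool, (F (z i₀)) a *
            laplaceMech f b (fun i => maskSample ((z i) : Fin d → ℝ) (e.symm (a, g) i)) S
        ≤ (∏ i ∈ ({i₀}ᶜ : Finset (Fin n)), (F (z' i)) (e.symm (T, g) i)) *
          (Kp * laplaceMech f b (fun i => maskSample ((z i) : Fin d → ℝ) (e.symm (T, g) i)) S) :=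
          mul_le_mul_right (hgup g) _
      _ = (∏ i ∈ ({i₀}ᶜ : Finset (Fin n)), (F (z' i)) (e.symm (T, g) i)) *
          (Kp * laplaceMech f b (fun i => maskSample ((z' i) : Fin d → ℝ) (e.symm (T, g) i)) S) := by
          rw [hdatT g]
      _ ≤ (∏ i ∈ ({i₀}ᶜ : Finset (Fin n)), (F (z' i)) (e.symm (T, g) i)) *
          ((E' * Km) * laplaceMech f b
            (fun i => maskSample ((z' i) : Fin d → ℝ) (e.symm (T, g) i)) S) :=
          mul_le_mul_right (mul_le_mul_left hKscalar _) _
      _ = E' * ((∏ i ∈ ({i₀}ᶜ : Finset (Fin n)), (F (z' i)) (e.symm (T, g) i)) *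
          (Km * laplaceMech f b
            (fun i => maskSample ((z' i) : Fin d → ℝ) (e.symm (T, g) i)) S)) := by
          ring
      _ ≤ E' * ((∏ i ∈ ({i₀}ᶜ : Finset (Fin n)), (F (z' i)) (e.symm (T, g) i)) *
          ∑ a : Fin d → Bool, (F (z' i₀)) a *
            laplaceMech f b (fun i => maskSample ((z' i) : Fin d → ℝ) (e.symm (a, g) i)) S) :=
          mul_le_mul_right (mul_le_mul_right (hgdown g) _) _
end
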